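/- arXiv:0905.2846 — 5 statements merged into one kernel-verified Lean document; each statement's English description precedes it below -/
import Mathlib

section
/- Define G^{ab}{}_{AC} := -γ^a{}_{(A}{}^B γ^b{}_{C)B}. Then G^{ab}{}_{AC} is antisymmetric in a,b, symmetric in A,C, and satisfies G_{abCD} G^{ab}{}_{AB} = ε_{AD} ε_{BC} + ε_{AC} ε_{BD}. -/
/-!
Antisymmetry of `ε` makes the pairing `X_A{}^B Y_{CB}` change sign when `(X, A)` and `(Y, C)`
are exchanged; this gives both symmetries of `G`. Lowering the vector indices of `G` with `g`
undoes the raising by `g⁻¹`, so `G_{abCD} G^{ab}{}_{AB}` is a symmetrization of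
`γ_{aC}{}^F γ_{bDF} γ^a{}_A{}^E γ^b{}_{BE}`. The Fierz identity, applied once to the
`a`-contraction and once to the `b`-contraction, turns this into pure `ε`-contractions, equal to
`5/4 ε_{AB} ε_{CD} + ε_{AD} ε_{BC} + (n - 3) ε_{AC} ε_{BD}` for spinor dimension `n`. The
symmetrization in `A, B` removes the first term and leaves
`(n - 2)/2 (ε_{AD} ε_{BC} + ε_{AC} ε_{BD})`, which is the claim for `n = 4`.
-/

open Finset

section Contractions

variable {R ι σ : Type*} [CommRing R] [Fintype ι]

theorem sum_mul_eq_ite_comm {n : Type*} [Fintype n] [DecidableEq n] {x y : n → n → R}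
    (h : ∀ i k, ∑ j, x i j * y j k = if i = k then 1 else 0) (i k : n) :
    ∑ j, y i j * x j k = if i = k then 1 else 0 := by
  have hxy : Matrix.of x * Matrix.of y = 1 := by
    ext i k
    simp [Matrix.mul_apply, Matrix.one_apply, h]
  simpa [Matrix.mul_apply, Matrix.one_apply] using Matrix.ext_iff.mpr (mul_eq_one_comm.mp hxy) i k

def vecContract (u : ι → ι → R) (X : ι → σ → σ → R) (a : ι) (A B : σ) : R :=
  ∑ b, u a b * X b A B

theorem vecContract_vecContract [DecidableEq ι] {u v : ι → ι → R}
    (h : ∀ a c, ∑ b, u a b * v b c = if a = c then 1 else 0) (X : ι → σ → σ → R) :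
    vecContract u (vecContract v X) = X := by
  ext a A B
  simp only [vecContract, mul_sum, ← mul_assoc]
  rw [sum_comm]
  simp [← sum_mul, h]

theorem sum_mul_vecContract (u : ι → ι → R) (X Y : ι → σ → σ → R) (C F A E : σ) :
    ∑ a, X a C F * vecContract u Y a A E = ∑ a, ∑ b, u a b * X a C F * Y b A E := by
  simp only [vecContract, mul_sum]
  exact sum_congr rfl fun a _ => sum_congr rfl fun b _ => by ring

variable [Fintype σ]

def spinLower (ε X : σ → σ → R) (A B : σ) : R :=
  ∑ C, X A C * ε C B

/-- `X_A{}^B Y_{CB}`. -/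
def spinPair (ε X Y : σ → σ → R) (A C : σ) : R :=
  ∑ B, X A B * spinLower ε Y C B

theorem spinLower_vecContract (ε : σ → σ → R) (u : ι → ι → R) (X : ι → σ → σ → R) (a : ι) :
    spinLower ε (vecContract u X a) = vecContract u (fun b => spinLower ε (X b)) a := by
  ext A B
  simp only [spinLower, vecContract, sum_mul, mul_sum, mul_assoc]
  exact sum_comm

theorem spinPair_swap {ε : σ → σ → R} (hε : ∀ A B, ε A B = -ε B A) (X Y : σ → σ → R)
    (A C : σ) : spinPair ε X Y A C = -spinPair ε Y X C A := by
  simp only [spinPair, spinLower, mul_sum, ← sum_neg_distrib]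
  rw [sum_comm]
  refine sum_congr rfl fun B _ => sum_congr rfl fun H _ => ?_
  rw [hε]
  ring

theorem spinPair_vecContract (ε : σ → σ → R) (u v : ι → ι → R) (X Y : ι → σ → σ → R)
    (a b : ι) (A C : σ) :
    spinPair ε (vecContract u X a) (vecContract v Y b) A C
      = ∑ c, ∑ d, u a c * v b d * spinPair ε (X c) (Y d) A C := by
  simp only [spinPair, spinLower_vecContract]
  simp only [vecContract, sum_mul, mul_sum]
  calc _ = ∑ B, ∑ c, ∑ d, u a c * X c A B * (v b d * spinLower ε (Y d) C B) :=
        sum_congr rfl fun B _ => sum_comm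
    _ = _ := by
      rw [sum_comm]
      refine sum_congr rfl fun c _ => sum_comm.trans ?_
      exact sum_congr rfl fun d _ => sum_congr rfl fun B _ => by ring

theorem sum_sum_spinLower_mul_spinLower (u : ι → ι → R) (ε : σ → σ → R) (X Y : ι → σ → σ → R)
    (D F B E : σ) :
    ∑ a, ∑ b, u a b * spinLower ε (X a) D F * spinLower ε (Y b) B E
      = ∑ H, ∑ K, ε H F * ε K E * ∑ a, ∑ b, u a b * X a D H * Y b B K := by
  simp only [spinLower, mul_sum, sum_mul]
  simp_rw [sum_comm (s := (univ : Finset ι)) (t := (univ : Finset σ))]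
  rw [sum_comm]
  refine sum_congr rfl fun H _ => sum_congr rfl fun K _ => ?_
  exact sum_congr rfl fun a _ => sum_congr rfl fun b _ => by ring

theorem sum_sum_spinPair_mul_spinPair (ε : σ → σ → R) (X Y Z W : ι → σ → σ → R)
    (C D A B : σ) :
    ∑ a, ∑ b, spinPair ε (X a) (Y b) C D * spinPair ε (Z a) (W b) A B
      = ∑ F, ∑ E, (∑ a, X a C F * Z a A E)
          * ∑ b, spinLower ε (Y b) D F * spinLower ε (W b) B E := by
  simp only [spinPair, sum_mul_sum]
  simp_rw [sum_comm (s := (univ : Finset ι)) (t := (univ : Finset σ))]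
  refine sum_congr rfl fun F _ => sum_congr rfl fun E _ => ?_
  exact sum_congr rfl fun a _ => sum_congr rfl fun b _ => by ring

end Contractions

section Fierz

variable {R ι σ : Type*} [Field R] [Fintype σ]

/-- `-X_{a(A}{}^B X_{bC)B}`, the symmetrization including the factor `1/2`. -/
def symGammaProd (ε : σ → σ → R) (X : ι → σ → σ → R) (a b : ι) (A C : σ) : R :=
  -(1/2 : R) * (spinPair ε (X a) (X b) A C + spinPair ε (X a) (X b) C A)

theorem symGammaProd_antisymm {ε : σ → σ → R} (hε : ∀ A B, ε A B = -ε B A)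
    (X : ι → σ → σ → R) (a b : ι) (A C : σ) :
    symGammaProd ε X a b A C = -symGammaProd ε X b a A C := by
  simp only [symGammaProd, spinPair_swap hε (X a)]
  ring

theorem symGammaProd_symm (ε : σ → σ → R) (X : ι → σ → σ → R) (a b : ι) (A C : σ) :
    symGammaProd ε X a b A C = symGammaProd ε X a b C A := by
  simp only [symGammaProd, add_comm]

variable [Fintype ι]

theorem symGammaProd_vecContract (ε : σ → σ → R) (u : ι → ι → R) (X : ι → σ → σ → R)
    (a b : ι) (A C : σ) :
    symGammaProd ε (vecContract u X) a b A C
      = ∑ c, ∑ d, u a c * u b d * symGammaProd ε X c d A C := by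
  simp only [symGammaProd, spinPair_vecContract, mul_sum, ← sum_add_distrib]
  exact sum_congr rfl fun c _ => sum_congr rfl fun d _ => by ring

variable [DecidableEq σ]

/-- The right-hand side of `γ_{aD}{}^A γ^a{}_C{}^B = ½ δ_D^A δ_C^B - δ_C^A δ_D^B + ε_{CD} ε^{AB}`. -/
def fierzKernel (ε εh : σ → σ → R) (D A C B : σ) : R :=
  (1/2) * (if D = A then 1 else 0) * (if C = B then 1 else 0)
    - (if C = A then 1 else 0) * (if D = B then 1 else 0) + ε C D * εh A B

theorem sum_sum_mul_fierzKernel {ε εh : σ → σ → R}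
    (hεh : ∀ K F, ∑ H, εh H K * ε H F = if K = F then 1 else 0) (D F B E : σ) :
    ∑ H, ∑ K, ε H F * ε K E * fierzKernel ε εh D H B K
      = 1/2 * (ε D F * ε B E) - ε B F * ε D E + ε B D * ε F E := by
  have hεεh : ∑ H, ∑ K, ε H F * ε K E * (ε B D * εh H K) = ε B D * ε F E := calc
    _ = ε B D * ∑ K, ε K E * ∑ H, εh H K * ε H F := by
      rw [sum_comm]
      simp only [mul_sum]
      exact sum_congr rfl fun K _ => sum_congr rfl fun H _ => by ring
    _ = ε B D * ε F E := by simp [hεh]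
  simp only [fierzKernel, mul_add, mul_sub, sum_add_distrib, sum_sub_distrib, hεεh]
  simp only [mul_ite, mul_one, mul_zero, sum_ite_eq, mem_univ, if_true]
  ring

theorem sum_sum_fierzKernel_mul (ε εh Q : σ → σ → R) (C A : σ) :
    ∑ F, ∑ E, fierzKernel ε εh C F A E * Q F E
      = 1/2 * Q C A - Q A C + ε A C * ∑ F, ∑ E, εh F E * Q F E := by
  simp only [fierzKernel, add_mul, sub_mul, sum_add_distrib, sum_sub_distrib,
    mul_sum, mul_assoc]
  simp [sum_ite_eq]

theorem sum_sum_inv_mul_mul {ε εh : σ → σ → R}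
    (hεinv : ∀ A C, ∑ B, ε A B * εh C B = if A = C then 1 else 0) (x : σ → R) (B : σ) :
    ∑ F, ∑ E, εh F E * (x F * ε B E) = x B := calc
  _ = ∑ F, x F * ∑ E, ε B E * εh F E := by
    simp only [mul_sum]
    exact sum_congr rfl fun F _ => sum_congr rfl fun E _ => by ring
  _ = x B := by simp [hεinv]

theorem sum_sum_fierzKernel_mul_lowered [CharZero R] {ε εh : σ → σ → R}
    (hεa : ∀ A B, ε A B = -ε B A)
    (hεinv : ∀ A C, ∑ B, ε A B * εh C B = if A = C then 1 else 0)
    (hεh : ∀ K F, ∑ H, εh H K * ε H F = if K = F then 1 else 0) (C D A B : σ) :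
    ∑ F, ∑ E, fierzKernel ε εh C F A E * ∑ H, ∑ K, ε H F * ε K E * fierzKernel ε εh D H B K
      = 5/4 * (ε A B * ε C D) + ε A D * ε B C + (Fintype.card σ - 3) * (ε A C * ε B D) := by
  have htrace : ∑ F, ∑ E, εh F E * ε F E = Fintype.card σ := by
    simp only [mul_comm (εh _ _), hεinv]
    simp
  have hcontract : ∑ F, ∑ E, εh F E * (1/2 * (ε D F * ε B E) - ε B F * ε D E + ε B D * ε F E)
      = 1/2 * ε D B - ε B D + ε B D * Fintype.card σ := calc
    _ = ∑ F, ∑ E, (εh F E * ((1/2 * ε D F) * ε B E) - εh F E * (ε B F * ε D E)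
          + ε B D * (εh F E * ε F E)) :=
      sum_congr rfl fun F _ => sum_congr rfl fun E _ => by ring
    _ = 1/2 * ε D B - ε B D + ε B D * Fintype.card σ := by
      simp only [sum_add_distrib, sum_sub_distrib, ← mul_sum,
        sum_sum_inv_mul_mul hεinv, htrace]
  simp only [sum_sum_mul_fierzKernel hεh, sum_sum_fierzKernel_mul, hcontract]
  rw [hεa B A, hεa C A, hεa D A, hεa D B, hεa D C]
  ring

theorem sum_sum_spinPair_mul_spinPair_of_fierz {ε εh : σ → σ → R} {u : ι → ι → R}
    {γ : ι → σ → σ → R}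
    (hfierz : ∀ D A C B, ∑ a, ∑ b, u a b * γ a D A * γ b C B = fierzKernel ε εh D A C B)
    (C D A B : σ) :
    ∑ a, ∑ b, spinPair ε (γ a) (γ b) C D * spinPair ε (vecContract u γ a) (vecContract u γ b) A B
      = ∑ F, ∑ E, fierzKernel ε εh C F A E
          * ∑ H, ∑ K, ε H F * ε K E * fierzKernel ε εh D H B K := by
  simp only [sum_sum_spinPair_mul_spinPair, spinLower_vecContract, sum_mul_vecContract,
    sum_sum_spinLower_mul_spinLower, hfierz]

theorem sum_sum_symGammaProd_mul_symGammaProd [CharZero R] {ε εh : σ → σ → R}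
    {u : ι → ι → R} {γ : ι → σ → σ → R} (hεa : ∀ A B, ε A B = -ε B A)
    (hεinv : ∀ A C, ∑ B, ε A B * εh C B = if A = C then 1 else 0)
    (hεh : ∀ K F, ∑ H, εh H K * ε H F = if K = F then 1 else 0)
    (hfierz : ∀ D A C B, ∑ a, ∑ b, u a b * γ a D A * γ b C B = fierzKernel ε εh D A C B)
    (A B C D : σ) :
    ∑ a, ∑ b, symGammaProd ε γ a b C D * symGammaProd ε (vecContract u γ) a b A B
      = (Fintype.card σ - 2) / 2 * (ε A D * ε B C + ε A C * ε B D) := by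
  have hpair (C D A B : σ) := (sum_sum_spinPair_mul_spinPair_of_fierz hfierz C D A B).trans
    (sum_sum_fierzKernel_mul_lowered hεa hεinv hεh C D A B)
  set P := fun C D A B => ∑ a, ∑ b,
    spinPair ε (γ a) (γ b) C D * spinPair ε (vecContract u γ a) (vecContract u γ b) A B
  calc _ = 1/4 * (P C D A B + P C D B A + P D C A B + P D C B A) := by
        simp only [P, symGammaProd, mul_sum, ← sum_add_distrib]
        exact sum_congr rfl fun a _ => sum_congr rfl fun b _ => by ring
    _ = _ := by
        simp only [P, hpair]
        rw [hεa B A, hεa D C]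
        ring

end Fierz

theorem stmt_5_general
    (g ginv : Fin 5 → Fin 5 → ℂ)
    (ε εh : Fin 4 → Fin 4 → ℂ)
    (γ γlo γmixU γloU : Fin 5 → Fin 4 → Fin 4 → ℂ)
    (G Glo : Fin 5 → Fin 5 → Fin 4 → Fin 4 → ℂ)
    (hεa : ∀ A B : Fin 4, ε A B = -ε B A)
    (hεinv : ∀ A C : Fin 4,
      ∑ B : Fin 4, ε A B * εh C B = if A = C then (1 : ℂ) else 0)
    (hginv : ∀ a b : Fin 5,
      ∑ c : Fin 5, ginv a c * g c b = if a = b then (1 : ℂ) else 0)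
    (hfund : ∀ (D A C B : Fin 4),
      ∑ a : Fin 5, ∑ b : Fin 5, ginv a b * γ a D A * γ b C B
        = (1/2) * (if D = A then (1 : ℂ) else 0) * (if C = B then (1 : ℂ) else 0)
          - (if C = A then (1 : ℂ) else 0) * (if D = B then (1 : ℂ) else 0)
          + ε C D * εh A B)
    (hγlo : ∀ (a : Fin 5) (A B : Fin 4),
      γlo a A B = ∑ C : Fin 4, γ a A C * ε C B)
    (hγmixU : ∀ (a : Fin 5) (A B : Fin 4),
      γmixU a A B = ∑ b : Fin 5, ginv a b * γ b A B)
    (hγloU : ∀ (a : Fin 5) (A B : Fin 4),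
      γloU a A B = ∑ b : Fin 5, ginv a b * γlo b A B)
    (hG : ∀ (a b : Fin 5) (A C : Fin 4),
      G a b A C = -(1/2 : ℂ) *
        ((∑ B : Fin 4, γmixU a A B * γloU b C B)
          + (∑ B : Fin 4, γmixU a C B * γloU b A B)))
    (hGlo : ∀ (a b : Fin 5) (A C : Fin 4),
      Glo a b A C = ∑ c : Fin 5, ∑ d : Fin 5, g a c * g b d * G c d A C) :
    (∀ (a b : Fin 5) (A C : Fin 4), G a b A C = -G b a A C) ∧
    (∀ (a b : Fin 5) (A C : Fin 4), G a b A C = G a b C A) ∧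
    (∀ (A B C D : Fin 4),
      ∑ a : Fin 5, ∑ b : Fin 5, Glo a b C D * G a b A B
        = ε A D * ε B C + ε A C * ε B D) := by
  have hεinv_left := sum_mul_eq_ite_comm (x := ε) (y := fun B C => εh C B) hεinv
  have hγmixU_eq : γmixU = vecContract ginv γ := by
    ext a A B
    exact hγmixU a A B
  have hγloU_eq : γloU = fun b => spinLower ε (vecContract ginv γ b) := by
    ext b C B
    rw [spinLower_vecContract, hγloU]
    simp only [vecContract, spinLower, hγlo]
  have hG_eq : G = symGammaProd ε (vecContract ginv γ) := by
    ext a b A C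
    rw [hG, hγmixU_eq, hγloU_eq]
    rfl
  have hGlo_eq : Glo = symGammaProd ε γ := by
    ext a b A C
    rw [hGlo, hG_eq, ← symGammaProd_vecContract, vecContract_vecContract (sum_mul_eq_ite_comm hginv)]
  subst hG_eq hGlo_eq
  refine ⟨symGammaProd_antisymm hεa _, symGammaProd_symm ε _, fun A B C D => ?_⟩
  rw [sum_sum_symGammaProd_mul_symGammaProd hεa hεinv hεinv_left hfund]
  norm_num

/-- `G^{ab}{}_{AC} := -γ^a{}_{(A}{}^B γ^b{}_{C)B}` is
antisymmetric in `a,b`, symmetric in `A,C`, and satisfies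
`G_{abCD} G^{ab}{}_{AB} = ε_{AD} ε_{BC} + ε_{AC} ε_{BD}`. -/
theorem stmt_5
    (g ginv : Fin 5 → Fin 5 → ℂ)
    (ε εh : Fin 4 → Fin 4 → ℂ)
    (γ γlo γmixU γloU : Fin 5 → Fin 4 → Fin 4 → ℂ)
    (G Glo : Fin 5 → Fin 5 → Fin 4 → Fin 4 → ℂ)
    (hεa : ∀ A B : Fin 4, ε A B = -ε B A)
    (hεinv : ∀ A C : Fin 4,
      ∑ B : Fin 4, ε A B * εh C B = if A = C then (1 : ℂ) else 0)
    (hgsymm : ∀ a b : Fin 5, g a b = g b a)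
    (hginv : ∀ a b : Fin 5,
      ∑ c : Fin 5, ginv a c * g c b = if a = b then (1 : ℂ) else 0)
    (hcl : ∀ (a b : Fin 5) (A C : Fin 4),
      (∑ B : Fin 4, γ a A B * γ b B C) + (∑ B : Fin 4, γ b A B * γ a B C)
        = -(if A = C then (1 : ℂ) else 0) * g a b)
    (hfund : ∀ (D A C B : Fin 4),
      ∑ a : Fin 5, ∑ b : Fin 5, ginv a b * γ a D A * γ b C B
        = (1/2) * (if D = A then (1 : ℂ) else 0) * (if C = B then (1 : ℂ) else 0)
          - (if C = A then (1 : ℂ) else 0) * (if D = B then (1 : ℂ) else 0)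
          + ε C D * εh A B)
    (htr : ∀ a : Fin 5, ∑ A : Fin 4, γ a A A = 0)
    (hγlo : ∀ (a : Fin 5) (A B : Fin 4),
      γlo a A B = ∑ C : Fin 4, γ a A C * ε C B)
    (hγmixU : ∀ (a : Fin 5) (A B : Fin 4),
      γmixU a A B = ∑ b : Fin 5, ginv a b * γ b A B)
    (hγloU : ∀ (a : Fin 5) (A B : Fin 4),
      γloU a A B = ∑ b : Fin 5, ginv a b * γlo b A B)
    (hG : ∀ (a b : Fin 5) (A C : Fin 4),
      G a b A C = -(1/2 : ℂ) *
        ((∑ B : Fin 4, γmixU a A B * γloU b C B)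
          + (∑ B : Fin 4, γmixU a C B * γloU b A B)))
    (hGlo : ∀ (a b : Fin 5) (A C : Fin 4),
      Glo a b A C = ∑ c : Fin 5, ∑ d : Fin 5, g a c * g b d * G c d A C) :
    (∀ (a b : Fin 5) (A C : Fin 4), G a b A C = -G b a A C) ∧
    (∀ (a b : Fin 5) (A C : Fin 4), G a b A C = G a b C A) ∧
    (∀ (A B C D : Fin 4),
      ∑ a : Fin 5, ∑ b : Fin 5, Glo a b C D * G a b A B
        = ε A D * ε B C + ε A C * ε B D) :=
  stmt_5_general g ginv ε εh γ γlo γmixU γloU G Glo hεa hεinv hginv hfund hγlo hγmixU hγloU hG hGlo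
end

section
/- With G^{ab}{}_{AB} defined as above, G_{ad}{}^{AB} G_{bcAB} = g_{ab} g_{cd} − g_{ac} g_{bd}. -/
/-!
Write `Γ_a` for the matrix `γ_a{}^A{}_B` and `E` for `ε_{AB}`. Antisymmetry of `Γ_a E` and of `E`
give the charge-conjugation identity `(Γ_a Γ_b E)ᵀ = -Γ_b Γ_a E`, so lowering both vector indices
of `G` produces the symmetric matrix `G_{ab} = ½ [Γ_a, Γ_b] E`. Raising its spinor indices with
`ε⁻¹` and contracting, the left-hand side becomes `-¼ tr ([Γ_a, Γ_d] [Γ_b, Γ_c])`, which the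
Clifford relation evaluates by the usual four-gamma trace identity; `tr 1 = 4` cancels the `¼`.
-/

open Matrix

namespace Matrix

section Clifford

variable {ι n R : Type*} [Fintype n] [DecidableEq n] [CommRing R]

def IsClifford (g : ι → ι → R) (Γ : ι → Matrix n n R) : Prop :=
  ∀ e f, Γ e * Γ f + Γ f * Γ e = -g e f • (1 : Matrix n n R)

namespace IsClifford

variable {g : ι → ι → R} {Γ : ι → Matrix n n R}

theorem trace_mul_mul_mul_add_swap (hΓ : IsClifford g Γ) (X Y : Matrix n n R) (e f : ι) :
    trace (X * Γ e * Γ f * Y) + trace (X * Γ f * Γ e * Y) = -g e f * trace (X * Y) := by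
  have h := congrArg (fun M => trace (X * M * Y)) (hΓ e f)
  simpa only [mul_add, add_mul, trace_add, mul_smul_comm, smul_mul_assoc, mul_one, trace_smul,
    smul_eq_mul, mul_assoc] using h

theorem two_mul_trace_mul (hΓ : IsClifford g Γ) (e f : ι) :
    2 * trace (Γ e * Γ f) = -Fintype.card n * g e f := by
  have h := hΓ.trace_mul_mul_mul_add_swap 1 1 e f
  simp only [one_mul, mul_one, trace_one] at h
  rw [trace_mul_comm (Γ f)] at h
  linear_combination h

theorem four_mul_trace_mul_mul_mul (hΓ : IsClifford g Γ) (e f p q : ι) :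
    4 * trace (Γ e * Γ f * Γ p * Γ q) =
      Fintype.card n * (g e f * g p q - g e p * g f q + g e q * g f p) := by
  have h₁ := hΓ.trace_mul_mul_mul_add_swap 1 (Γ p * Γ q) e f
  have h₂ := hΓ.trace_mul_mul_mul_add_swap (Γ f) (Γ q) e p
  have h₃ := hΓ.trace_mul_mul_mul_add_swap (Γ f * Γ p) 1 e q
  have hcyc : trace (Γ f * Γ p * Γ q * Γ e) = trace (Γ e * Γ f * Γ p * Γ q) := by
    rw [trace_mul_comm]; simp only [mul_assoc]
  simp only [one_mul, mul_one, ← mul_assoc] at h₁ h₂ h₃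
  linear_combination 2 * h₁ - 2 * h₂ + 2 * h₃ - 2 * hcyc - g e f * hΓ.two_mul_trace_mul p q
    + g e p * hΓ.two_mul_trace_mul f q - g e q * hΓ.two_mul_trace_mul f p

theorem lie_eq (hΓ : IsClifford g Γ) (e f : ι) :
    ⁅Γ e, Γ f⁆ = (2 : R) • (Γ e * Γ f) + g e f • 1 := by
  have h : Γ f * Γ e = -(g e f • 1) - Γ e * Γ f := by
    rw [← neg_smul]; exact eq_sub_of_add_eq' (hΓ e f)
  rw [Ring.lie_def, h, two_smul]
  abel

theorem trace_lie_mul_lie (hΓ : IsClifford g Γ) (a b c d : ι) :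
    trace (⁅Γ a, Γ b⁆ * ⁅Γ c, Γ d⁆) =
      Fintype.card n * (g a d * g b c - g a c * g b d) := by
  rw [hΓ.lie_eq, hΓ.lie_eq]
  simp only [add_mul, mul_add, smul_mul_assoc, mul_smul_comm, one_mul, mul_one,
    trace_add, trace_smul, trace_one, smul_eq_mul, ← mul_assoc]
  linear_combination hΓ.four_mul_trace_mul_mul_mul a b c d + g c d * hΓ.two_mul_trace_mul a b
    + g a b * hΓ.two_mul_trace_mul c d

end IsClifford

end Clifford

section ChargeConjugation

variable {n R : Type*} [Fintype n] [CommRing R] {E A B : Matrix n n R}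

theorem mul_transpose_eq_of_transpose_mul_eq_neg (hE : Eᵀ = -E) (hA : (A * E)ᵀ = -(A * E)) :
    E * Aᵀ = A * E := by
  rw [transpose_mul, hE, neg_mul] at hA
  exact neg_injective hA

theorem transpose_mul_mul_eq_neg (hE : Eᵀ = -E) (hA : (A * E)ᵀ = -(A * E))
    (hB : (B * E)ᵀ = -(B * E)) : (A * B * E)ᵀ = -(B * A * E) := by
  rw [mul_assoc, transpose_mul, hB, neg_mul, mul_assoc,
    mul_transpose_eq_of_transpose_mul_eq_neg hE hA, mul_assoc]

theorem transpose_lie_mul (hE : Eᵀ = -E) (hA : (A * E)ᵀ = -(A * E))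
    (hB : (B * E)ᵀ = -(B * E)) : (⁅A, B⁆ * E)ᵀ = ⁅A, B⁆ * E := by
  rw [Ring.lie_def, sub_mul, transpose_sub, transpose_mul_mul_eq_neg hE hA hB,
    transpose_mul_mul_eq_neg hE hB hA, neg_sub_neg]

theorem mul_transpose_add_transpose_eq_neg_lie_mul (hE : Eᵀ = -E) (hA : (A * E)ᵀ = -(A * E))
    (hB : (B * E)ᵀ = -(B * E)) : A * (B * E)ᵀ + (A * (B * E)ᵀ)ᵀ = -(⁅A, B⁆ * E) := by
  rw [hB, mul_neg, transpose_neg, ← mul_assoc, transpose_mul_mul_eq_neg hE hA hB, Ring.lie_def,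
    sub_mul]
  abel

theorem trace_mul_mul_transpose_mul [DecidableEq n] (hE : Eᵀ = -E) {Eh : Matrix n n R}
    (hEh : E * Ehᵀ = 1) (X Y : Matrix n n R) :
    trace (Eh * (X * E) * Ehᵀ * (Y * E)) = -trace (X * Y) := by
  have hEEh : E * Eh = -1 := by
    have h := congrArg transpose (mul_eq_one_comm.mp hEh)
    rwa [transpose_mul, transpose_transpose, hE, transpose_one, neg_mul, neg_eq_iff_eq_neg] at h
  calc trace (Eh * (X * E) * Ehᵀ * (Y * E))
      = trace (Eh * (X * (E * Ehᵀ) * (Y * E))) := by simp only [mul_assoc]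
    _ = trace (X * Y * (E * Eh)) := by rw [hEh, mul_one, trace_mul_comm]; simp only [mul_assoc]
    _ = -trace (X * Y) := by rw [hEEh, mul_neg_one, trace_neg]

end ChargeConjugation

theorem IsClifford.trace_lie_mul_contract {ι n R : Type*} [Fintype n] [DecidableEq n]
    [CommRing R] {g : ι → ι → R} {Γ : ι → Matrix n n R} {E Eh : Matrix n n R}
    (hΓ : IsClifford g Γ) (hE : Eᵀ = -E) (hEh : E * Ehᵀ = 1)
    (hskew : ∀ e, (Γ e * E)ᵀ = -(Γ e * E)) (a b c d : ι) :
    trace (Eh * (⁅Γ a, Γ d⁆ * E) * Ehᵀ * (⁅Γ b, Γ c⁆ * E)ᵀ) =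
      Fintype.card n * (g a b * g d c - g a c * g d b) := by
  rw [transpose_lie_mul hE (hskew b) (hskew c), trace_mul_mul_transpose_mul hE hEh,
    hΓ.trace_lie_mul_lie]
  ring

theorem sum_sum_mul_eq_trace_mul_transpose {m n R : Type*} [Fintype m] [Fintype n]
    [CommSemiring R] (A B : Matrix m n R) : ∑ i, ∑ j, A i j * B i j = trace (A * Bᵀ) := by
  simp [trace, mul_apply]

theorem sum_sum_mul_mul_sum_mul {ι n R : Type*} [Fintype ι] [Fintype n] [CommSemiring R]
    (u v : ι → R) (U V : ι → n → R) :
    ∑ c, ∑ d, u c * v d * ∑ B, U c B * V d B = ∑ B, (∑ c, u c * U c B) * (∑ d, v d * V d B) := by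
  simp_rw [Finset.sum_mul_sum, Finset.mul_sum, ← Finset.sum_comm_cycle (u := Finset.univ (α := n)),
    mul_mul_mul_comm]

theorem sum_mul_sum_mul_of_mul_eq_one {ι R : Type*} [Fintype ι] [DecidableEq ι] [CommRing R]
    {g ginv : ι → ι → R} (h : of g * of ginv = 1) (v : ι → R) (x : ι) :
    ∑ c, g x c * ∑ e, ginv c e * v e = v x := by
  simpa [mulVec, dotProduct] using
    congrFun (show of g *ᵥ (of ginv *ᵥ v) = v by rw [mulVec_mulVec, h, one_mulVec]) x

theorem of_eq_mul_mul_transpose {n R : Type*} [Fintype n] [CommSemiring R]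
    {X P M : n → n → R} (h : ∀ A B, X A B = ∑ C, ∑ D, P A C * P B D * M C D) :
    of X = of P * of M * (of P)ᵀ := by
  ext A B
  simp only [of_apply, mul_apply, transpose_apply, h, Finset.sum_mul]
  rw [Finset.sum_comm]
  simp only [mul_right_comm]

theorem of_lower_lower_eq {ι n K : Type*} [Fintype ι] [DecidableEq ι] [Fintype n] [Field K]
    {g ginv : ι → ι → K} {γ γlo γmixU γloU : ι → n → n → K} {G Glo : ι → ι → n → n → K}
    (hg : of g * of ginv = 1)
    (hγmixU : ∀ a A B, γmixU a A B = ∑ b, ginv a b * γ b A B)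
    (hγloU : ∀ a A B, γloU a A B = ∑ b, ginv a b * γlo b A B)
    (hG : ∀ a b A C, G a b A C = -(1/2 : K) *
        ((∑ B, γmixU a A B * γloU b C B) + (∑ B, γmixU a C B * γloU b A B)))
    (hGlo : ∀ a b A C, Glo a b A C = ∑ c, ∑ d, g a c * g b d * G c d A C) (x y : ι) :
    of (Glo x y) = -(1/2 : K) • (of (γ x) * (of (γlo y))ᵀ + (of (γ x) * (of (γlo y))ᵀ)ᵀ) := by
  ext A C
  simp only [of_apply, hGlo, hG, hγmixU, hγloU, mul_add, mul_left_comm _ (-(1/2 : K)),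
    Finset.sum_add_distrib, ← Finset.mul_sum, sum_sum_mul_mul_sum_mul,
    sum_mul_sum_mul_of_mul_eq_one hg]
  simp only [smul_apply, add_apply, transpose_apply, mul_apply, of_apply, smul_eq_mul]
  ring

end Matrix

theorem stmt_6_general
    (g ginv : Fin 5 → Fin 5 → ℂ)
    (ε εh : Fin 4 → Fin 4 → ℂ)
    (γ γlo γmixU γloU : Fin 5 → Fin 4 → Fin 4 → ℂ)
    (G Glo Gs : Fin 5 → Fin 5 → Fin 4 → Fin 4 → ℂ)
    (hεa : ∀ A B : Fin 4, ε A B = -ε B A)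
    (hεinv : ∀ A C : Fin 4,
      ∑ B : Fin 4, ε A B * εh C B = if A = C then (1 : ℂ) else 0)
    (hgsymm : ∀ a b : Fin 5, g a b = g b a)
    (hginv : ∀ a b : Fin 5,
      ∑ c : Fin 5, ginv a c * g c b = if a = b then (1 : ℂ) else 0)
    (hcl : ∀ (a b : Fin 5) (A C : Fin 4),
      (∑ B : Fin 4, γ a A B * γ b B C) + (∑ B : Fin 4, γ b A B * γ a B C)
        = -(if A = C then (1 : ℂ) else 0) * g a b)
    (hγlo : ∀ (a : Fin 5) (A B : Fin 4),
      γlo a A B = ∑ C : Fin 4, γ a A C * ε C B)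
    (hanti : ∀ (a : Fin 5) (A B : Fin 4), γlo a A B = -γlo a B A)
    (hγmixU : ∀ (a : Fin 5) (A B : Fin 4),
      γmixU a A B = ∑ b : Fin 5, ginv a b * γ b A B)
    (hγloU : ∀ (a : Fin 5) (A B : Fin 4),
      γloU a A B = ∑ b : Fin 5, ginv a b * γlo b A B)
    (hG : ∀ (a b : Fin 5) (A C : Fin 4),
      G a b A C = -(1/2 : ℂ) *
        ((∑ B : Fin 4, γmixU a A B * γloU b C B)
          + (∑ B : Fin 4, γmixU a C B * γloU b A B)))
    (hGlo : ∀ (a b : Fin 5) (A C : Fin 4),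
      Glo a b A C = ∑ c : Fin 5, ∑ d : Fin 5, g a c * g b d * G c d A C)
    (hGs : ∀ (a b : Fin 5) (A B : Fin 4),
      Gs a b A B = ∑ C : Fin 4, ∑ D : Fin 4, εh A C * εh B D * Glo a b C D) :
    ∀ (a b c d : Fin 5),
      ∑ A : Fin 4, ∑ B : Fin 4, Gs a d A B * Glo b c A B
        = g a b * g c d - g a c * g b d := by
  intro a b c d
  set Γ : Fin 5 → Matrix (Fin 4) (Fin 4) ℂ := fun e => of (γ e)
  have hE : (of ε)ᵀ = -of ε := by ext A B; simp [hεa B A]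
  have hEh : of ε * (of εh)ᵀ = 1 := by ext A C; simpa [mul_apply, one_apply] using hεinv A C
  have hlo : ∀ e, of (γlo e) = Γ e * of ε := fun e => by ext A B; simp [Γ, mul_apply, hγlo]
  have hskew : ∀ e, (Γ e * of ε)ᵀ = -(Γ e * of ε) := fun e => by
    rw [← hlo]; ext A B; simp [hanti e B A]
  have hΓ : IsClifford g Γ := fun e f => by ext A C; simp [Γ, mul_apply, hcl, one_apply, neg_ite]
  have hg : of g * of ginv = 1 :=
    mul_eq_one_comm.mp (by ext x y; simpa [mul_apply, one_apply] using hginv x y)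
  have hGlo' : ∀ x y, of (Glo x y) = (1/2 : ℂ) • (⁅Γ x, Γ y⁆ * of ε) := fun x y => by
    rw [of_lower_lower_eq hg hγmixU hγloU hG hGlo, hlo,
      mul_transpose_add_transpose_eq_neg_lie_mul hE (hskew x) (hskew y), smul_neg, neg_smul,
      neg_neg]
  calc ∑ A, ∑ B, Gs a d A B * Glo b c A B = trace (of (Gs a d) * (of (Glo b c))ᵀ) :=
        sum_sum_mul_eq_trace_mul_transpose _ _
    _ = g a b * g c d - g a c * g b d := by
        simp only [of_eq_mul_mul_transpose (hGs a d), hGlo', transpose_smul, smul_mul_assoc,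
          mul_smul_comm, trace_smul, smul_eq_mul, hΓ.trace_lie_mul_contract hE hEh hskew, hgsymm d c, hgsymm d b]
        norm_num
        ring

/-- `G_{ad}{}^{AB} G_{bcAB} = g_{ab} g_{cd} − g_{ac} g_{bd}`. -/
theorem stmt_6
    (g ginv : Fin 5 → Fin 5 → ℂ)
    (ε εh : Fin 4 → Fin 4 → ℂ)
    (γ γlo γmixU γloU : Fin 5 → Fin 4 → Fin 4 → ℂ)
    (G Glo Gs : Fin 5 → Fin 5 → Fin 4 → Fin 4 → ℂ)
    (hεa : ∀ A B : Fin 4, ε A B = -ε B A)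
    (hεinv : ∀ A C : Fin 4,
      ∑ B : Fin 4, ε A B * εh C B = if A = C then (1 : ℂ) else 0)
    (hgsymm : ∀ a b : Fin 5, g a b = g b a)
    (hginv : ∀ a b : Fin 5,
      ∑ c : Fin 5, ginv a c * g c b = if a = b then (1 : ℂ) else 0)
    (hcl : ∀ (a b : Fin 5) (A C : Fin 4),
      (∑ B : Fin 4, γ a A B * γ b B C) + (∑ B : Fin 4, γ b A B * γ a B C)
        = -(if A = C then (1 : ℂ) else 0) * g a b)
    (htr : ∀ a : Fin 5, ∑ A : Fin 4, γ a A A = 0)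
    (hγlo : ∀ (a : Fin 5) (A B : Fin 4),
      γlo a A B = ∑ C : Fin 4, γ a A C * ε C B)
    (hanti : ∀ (a : Fin 5) (A B : Fin 4), γlo a A B = -γlo a B A)
    (hεtr : ∀ a : Fin 5, ∑ A : Fin 4, ∑ B : Fin 4, εh A B * γlo a A B = 0)
    (hsq : ∀ (C D A B : Fin 4),
      ∑ a : Fin 5, ∑ b : Fin 5, ginv a b * γlo a C D * γlo b A B
        = ε A D * ε B C - ε A C * ε B D + (1/2) * ε A B * ε C D)
    (hγmixU : ∀ (a : Fin 5) (A B : Fin 4),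
      γmixU a A B = ∑ b : Fin 5, ginv a b * γ b A B)
    (hγloU : ∀ (a : Fin 5) (A B : Fin 4),
      γloU a A B = ∑ b : Fin 5, ginv a b * γlo b A B)
    (hG : ∀ (a b : Fin 5) (A C : Fin 4),
      G a b A C = -(1/2 : ℂ) *
        ((∑ B : Fin 4, γmixU a A B * γloU b C B)
          + (∑ B : Fin 4, γmixU a C B * γloU b A B)))
    (hGlo : ∀ (a b : Fin 5) (A C : Fin 4),
      Glo a b A C = ∑ c : Fin 5, ∑ d : Fin 5, g a c * g b d * G c d A C)
    (hGs : ∀ (a b : Fin 5) (A B : Fin 4),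
      Gs a b A B = ∑ C : Fin 4, ∑ D : Fin 4, εh A C * εh B D * Glo a b C D) :
    ∀ (a b c d : Fin 5),
      ∑ A : Fin 4, ∑ B : Fin 4, Gs a d A B * Glo b c A B
        = g a b * g c d - g a c * g b d :=
  stmt_6_general g ginv ε εh γ γlo γmixU γloU G Glo Gs hεa hεinv hgsymm hginv hcl hγlo hanti hγmixU
    hγloU hG hGlo hGs
end

section
/- Let T_{A_1B_1…A_pB_p} be a rank-2p spinor that is antisymmetric and ε-traceless in each of the p index pairs (A_j,B_j). Then there exists a unique tensor T_{a_1…a_p} on L such that T_{a_1…a_p} γ^{a_1}{}_{A_1B_1} ⋯ γ^{a_p}{}_{A_pB_p} = T_{A_1B_1…A_pB_p}, given explicitly by T_{a_1…a_p} = (−2)^{−p} γ_{a_1}{}^{A_1B_1} ⋯ γ_{a_p}{}^{A_pB_p} T_{A_1B_1…A_pB_p}. -/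
open Finset

private lemma sum_comm3 {α β γ : Type*} [Fintype α] [Fintype β] [Fintype γ]
    (f : α → β → γ → ℂ) :
    ∑ a : α, ∑ b : β, ∑ c : γ, f a b c = ∑ b : β, ∑ c : γ, ∑ a : α, f a b c := by
  calc ∑ a : α, ∑ b : β, ∑ c : γ, f a b c
      = ∑ b : β, ∑ a : α, ∑ c : γ, f a b c := Finset.sum_comm
    _ = ∑ b : β, ∑ c : γ, ∑ a : α, f a b c :=
        Finset.sum_congr rfl fun b _ => Finset.sum_comm

private lemma sum_comm4 {α β : Type*} [Fintype α] [Fintype β] (f : α → α → β → β → ℂ) :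
    ∑ X : α, ∑ Y : α, ∑ x : β, ∑ y : β, f X Y x y
      = ∑ x : β, ∑ y : β, ∑ X : α, ∑ Y : α, f X Y x y := by
  calc ∑ X : α, ∑ Y : α, ∑ x : β, ∑ y : β, f X Y x y
      = ∑ X : α, ∑ x : β, ∑ y : β, ∑ Y : α, f X Y x y :=
        Finset.sum_congr rfl fun X _ => sum_comm3 _
    _ = ∑ x : β, ∑ y : β, ∑ X : α, ∑ Y : α, f X Y x y := sum_comm3 _

private lemma aux_prod_ite {p n : ℕ} (a b : Fin p → Fin n) (c : ℂ) :
    (∏ j, (if b j = a j then c else 0)) = if b = a then c ^ p else 0 := by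
  by_cases h : b = a
  · subst h; simp
  · rw [if_neg h]
    obtain ⟨j, hj⟩ := Function.ne_iff.mp h
    exact Finset.prod_eq_zero (Finset.mem_univ j) (if_neg hj)

private lemma aux_contract (c : ℂ) : ∀ (p : ℕ) (K : Fin 4 → Fin 4 → Fin 4 → Fin 4 → ℂ)
    (T : (Fin p → Fin 4) → (Fin p → Fin 4) → ℂ),
    (∀ (j : Fin p) (A B : Fin p → Fin 4),
      ∑ X : Fin 4, ∑ Y : Fin 4, K X Y (A j) (B j) *
        T (Function.update A j X) (Function.update B j Y) = c * T A B) →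
    ∀ A B : Fin p → Fin 4,
      ∑ C : Fin p → Fin 4, ∑ D : Fin p → Fin 4,
        (∏ j, K (C j) (D j) (A j) (B j)) * T C D = c ^ p * T A B := by
  intro p
  induction p with
  | zero =>
    intro K T h A B
    simp only [pow_zero, one_mul, Finset.univ_unique, Finset.sum_singleton,
      Finset.prod_empty, Finset.univ_eq_empty, one_mul]
    exact congrArg₂ T (Subsingleton.elim _ _) (Subsingleton.elim _ _)
  | succ p ih =>
    intro K T h A B
    have hsum : ∀ f : (Fin (p+1) → Fin 4) → ℂ,
        ∑ C : Fin (p+1) → Fin 4, f C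
          = ∑ x : Fin 4, ∑ C : Fin p → Fin 4, f (Fin.cons x C) := by
      intro f
      rw [← Equiv.sum_comp (Fin.consEquiv fun _ => Fin 4) f, Fintype.sum_prod_type]
      rfl
    set T' : (Fin p → Fin 4) → (Fin p → Fin 4) → ℂ := fun C D =>
      ∑ x : Fin 4, ∑ y : Fin 4, K x y (A 0) (B 0) * T (Fin.cons x C) (Fin.cons y D) with hT'
    have h' : ∀ (j : Fin p) (A' B' : Fin p → Fin 4),
        ∑ X : Fin 4, ∑ Y : Fin 4, K X Y (A' j) (B' j) *
          T' (Function.update A' j X) (Function.update B' j Y) = c * T' A' B' := by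
      intro j A' B'
      have step : ∀ x y : Fin 4,
          c * T (Fin.cons x A') (Fin.cons y B')
            = ∑ X : Fin 4, ∑ Y : Fin 4, K X Y (A' j) (B' j) *
                T (Fin.cons x (Function.update A' j X))
                  (Fin.cons y (Function.update B' j Y)) := by
        intro x y
        have h2 := h j.succ (Fin.cons x A') (Fin.cons y B')
        simp only [Fin.cons_succ] at h2
        rw [← h2]
        simp only [← Fin.cons_update]
      calc ∑ X : Fin 4, ∑ Y : Fin 4, K X Y (A' j) (B' j) *
              T' (Function.update A' j X) (Function.update B' j Y)
          = ∑ X : Fin 4, ∑ Y : Fin 4, ∑ x : Fin 4, ∑ y : Fin 4,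
              K x y (A 0) (B 0) * (K X Y (A' j) (B' j) *
                T (Fin.cons x (Function.update A' j X))
                  (Fin.cons y (Function.update B' j Y))) := by
            refine Finset.sum_congr rfl fun X _ => Finset.sum_congr rfl fun Y _ => ?_
            simp only [hT', Finset.mul_sum]
            exact Finset.sum_congr rfl fun x _ => Finset.sum_congr rfl fun y _ => by ring
        _ = ∑ x : Fin 4, ∑ y : Fin 4, ∑ X : Fin 4, ∑ Y : Fin 4,
              K x y (A 0) (B 0) * (K X Y (A' j) (B' j) *
                T (Fin.cons x (Function.update A' j X))
                  (Fin.cons y (Function.update B' j Y))) := sum_comm4 _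
        _ = ∑ x : Fin 4, ∑ y : Fin 4, K x y (A 0) (B 0) *
              (c * T (Fin.cons x A') (Fin.cons y B')) := by
            refine Finset.sum_congr rfl fun x _ => Finset.sum_congr rfl fun y _ => ?_
            rw [step x y, Finset.mul_sum]
            exact Finset.sum_congr rfl fun X _ => by rw [Finset.mul_sum]
        _ = c * T' A' B' := by
            simp only [hT', Finset.mul_sum]
            exact Finset.sum_congr rfl fun x _ => Finset.sum_congr rfl fun y _ => by ring
    have tailA : ∀ (A : Fin (p+1) → Fin 4) (x : Fin 4),
        Fin.cons x (fun j : Fin p => A j.succ) = Function.update A 0 x := by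
      intro A x
      funext k
      cases k using Fin.cases with
      | zero => simp
      | succ i => simp [Fin.succ_ne_zero i]
    calc ∑ C : Fin (p+1) → Fin 4, ∑ D : Fin (p+1) → Fin 4,
            (∏ j, K (C j) (D j) (A j) (B j)) * T C D
        = ∑ x : Fin 4, ∑ C : Fin p → Fin 4, ∑ y : Fin 4, ∑ D : Fin p → Fin 4,
            (∏ j : Fin (p+1), K ((Fin.cons x C : Fin (p+1) → Fin 4) j) ((Fin.cons y D : Fin (p+1) → Fin 4) j) (A j) (B j)) *
              T (Fin.cons x C) (Fin.cons y D) := by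
          rw [hsum]
          exact Finset.sum_congr rfl fun x _ => Finset.sum_congr rfl fun C _ => hsum _
      _ = ∑ x : Fin 4, ∑ y : Fin 4, ∑ C : Fin p → Fin 4, ∑ D : Fin p → Fin 4,
            (∏ j : Fin (p+1), K ((Fin.cons x C : Fin (p+1) → Fin 4) j) ((Fin.cons y D : Fin (p+1) → Fin 4) j) (A j) (B j)) *
              T (Fin.cons x C) (Fin.cons y D) :=
          Finset.sum_congr rfl fun x _ => Finset.sum_comm
      _ = ∑ x : Fin 4, ∑ y : Fin 4, ∑ C : Fin p → Fin 4, ∑ D : Fin p → Fin 4,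
            (K x y (A 0) (B 0) *
              ∏ j : Fin p, K (C j) (D j) (A j.succ) (B j.succ)) *
              T (Fin.cons x C) (Fin.cons y D) := by
          refine Finset.sum_congr rfl fun x _ => Finset.sum_congr rfl fun y _ =>
            Finset.sum_congr rfl fun C _ => Finset.sum_congr rfl fun D _ => ?_
          rw [Fin.prod_univ_succ]
          simp only [Fin.cons_succ, Fin.cons_zero]
      _ = ∑ C : Fin p → Fin 4, ∑ D : Fin p → Fin 4, ∑ x : Fin 4, ∑ y : Fin 4,
            (K x y (A 0) (B 0) *
              ∏ j : Fin p, K (C j) (D j) (A j.succ) (B j.succ)) *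
              T (Fin.cons x C) (Fin.cons y D) := sum_comm4 _
      _ = ∑ C : Fin p → Fin 4, ∑ D : Fin p → Fin 4,
            (∏ j : Fin p, K (C j) (D j) ((fun j : Fin p => A j.succ) j)
              ((fun j : Fin p => B j.succ) j)) * T' C D := by
          refine Finset.sum_congr rfl fun C _ => Finset.sum_congr rfl fun D _ => ?_
          simp only [hT', Finset.mul_sum]
          exact Finset.sum_congr rfl fun x _ => Finset.sum_congr rfl fun y _ => by ring
      _ = c ^ p * T' (fun j : Fin p => A j.succ) (fun j : Fin p => B j.succ) :=
          ih K T' h' _ _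
      _ = c ^ (p+1) * T A B := by
          simp only [hT', tailA]
          rw [h 0 A B, pow_succ]
          ring





/-- A rank-`2p` spinor `T` that is antisymmetric and ε-traceless
in each of its `p` index pairs corresponds to a unique tensor `T_{a₁…a_p}`
with `T_{a₁…a_p} γ^{a₁}{}_{A₁B₁} ⋯ γ^{a_p}{}_{A_pB_p} = T_{A₁B₁…A_pB_p}`,
given explicitly by
`T_{a₁…a_p} = (−2)^{−p} γ_{a₁}{}^{A₁B₁} ⋯ γ_{a_p}{}^{A_pB_p} T_{A₁B₁…A_pB_p}`. -/
theorem stmt_8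
    (p : ℕ)
    (g ginv : Fin 5 → Fin 5 → ℂ)
    (ε εh : Fin 4 → Fin 4 → ℂ)
    (γlo γs γloU : Fin 5 → Fin 4 → Fin 4 → ℂ)
    (T : (Fin p → Fin 4) → (Fin p → Fin 4) → ℂ)
    (T0 : (Fin p → Fin 5) → ℂ)
    (hεa : ∀ A B : Fin 4, ε A B = -ε B A)
    (hεinv : ∀ A C : Fin 4,
      ∑ B : Fin 4, ε A B * εh C B = if A = C then (1 : ℂ) else 0)
    (hgsymm : ∀ a b : Fin 5, g a b = g b a)
    (hginv : ∀ a b : Fin 5,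
      ∑ c : Fin 5, ginv a c * g c b = if a = b then (1 : ℂ) else 0)
    (hanti : ∀ (a : Fin 5) (A B : Fin 4), γlo a A B = -γlo a B A)
    (hεtr : ∀ a : Fin 5, ∑ A : Fin 4, ∑ B : Fin 4, εh A B * γlo a A B = 0)
    (hγs : ∀ (a : Fin 5) (A B : Fin 4),
      γs a A B = ∑ C : Fin 4, ∑ D : Fin 4, εh A C * εh B D * γlo a C D)
    (hγloU : ∀ (a : Fin 5) (A B : Fin 4),
      γloU a A B = ∑ b : Fin 5, ginv a b * γlo b A B)
    (h2g : ∀ a b : Fin 5,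
      ∑ A : Fin 4, ∑ B : Fin 4, γs a A B * γlo b A B = -2 * g a b)
    (hsq : ∀ (C D A B : Fin 4),
      ∑ a : Fin 5, ∑ b : Fin 5, ginv a b * γlo a C D * γlo b A B
        = ε A D * ε B C - ε A C * ε B D + (1/2) * ε A B * ε C D)
    (hTanti : ∀ (j : Fin p) (A B : Fin p → Fin 4),
      T (Function.update A j (B j)) (Function.update B j (A j)) = -T A B)
    (hTtr : ∀ (j : Fin p) (A B : Fin p → Fin 4),
      ∑ X : Fin 4, ∑ Y : Fin 4,
        εh X Y * T (Function.update A j X) (Function.update B j Y) = 0)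
    (hT0 : ∀ a : Fin p → Fin 5,
      T0 a = (1 / (-2 : ℂ) ^ p) *
        ∑ A : Fin p → Fin 4, ∑ B : Fin p → Fin 4,
          (∏ j : Fin p, γs (a j) (A j) (B j)) * T A B) :
    (∀ (A B : Fin p → Fin 4),
      ∑ a : Fin p → Fin 5, T0 a * ∏ j : Fin p, γloU (a j) (A j) (B j) = T A B) ∧
    (∀ t : (Fin p → Fin 5) → ℂ,
      (∀ (A B : Fin p → Fin 4),
        ∑ a : Fin p → Fin 5, t a * ∏ j : Fin p, γloU (a j) (A j) (B j) = T A B)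
      → t = T0) := by
  classical
  set K : Fin 4 → Fin 4 → Fin 4 → Fin 4 → ℂ :=
    fun X Y a b => ∑ x : Fin 5, γs x X Y * γloU x a b with hKdef
  have hpow : ((-2 : ℂ)) ^ p ≠ 0 := pow_ne_zero _ (by norm_num)
  -- closed form of the kernel K
  have hK : ∀ X Y a b : Fin 4, K X Y a b =
      (if b = X then (1:ℂ) else 0) * (if a = Y then (1:ℂ) else 0)
      - (if a = X then (1:ℂ) else 0) * (if b = Y then (1:ℂ) else 0)
      + 1/2 * ε a b * εh X Y := by
    intro X Y a b
    simp only [hKdef]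
    have e2 : ∀ E F : Fin 4, εh X E * εh Y F *
        (∑ x : Fin 5, ∑ c : Fin 5, ginv x c * γlo x E F * γlo c a b)
        = (ε b E * εh X E) * (ε a F * εh Y F)
          - (ε a E * εh X E) * (ε b F * εh Y F)
          + (1/2 * ε a b) * (εh X E * (ε E F * εh Y F)) := by
      intro E F; rw [hsq E F a b]; ring
    calc (∑ x : Fin 5, γs x X Y * γloU x a b)
        = ∑ x : Fin 5, ∑ E : Fin 4, ∑ F : Fin 4, ∑ c : Fin 5,
            εh X E * εh Y F * (ginv x c * γlo x E F * γlo c a b) := by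
          refine Finset.sum_congr rfl fun x _ => ?_
          rw [hγs, hγloU]
          simp only [Finset.sum_mul, Finset.mul_sum]
          refine Eq.trans (sum_comm3 _) ?_
          refine Finset.sum_congr rfl fun E _ => ?_
          refine Finset.sum_congr rfl fun F _ => ?_
          refine Finset.sum_congr rfl fun c _ => ?_
          ring
      _ = ∑ E : Fin 4, ∑ F : Fin 4, ∑ x : Fin 5, ∑ c : Fin 5,
            εh X E * εh Y F * (ginv x c * γlo x E F * γlo c a b) := sum_comm3 _
      _ = ∑ E : Fin 4, ∑ F : Fin 4, εh X E * εh Y F *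
            ∑ x : Fin 5, ∑ c : Fin 5, ginv x c * γlo x E F * γlo c a b := by
          refine Finset.sum_congr rfl fun E _ => Finset.sum_congr rfl fun F _ => ?_
          simp only [Finset.mul_sum]
      _ = ∑ E : Fin 4, ∑ F : Fin 4,
            ((ε b E * εh X E) * (ε a F * εh Y F)
              - (ε a E * εh X E) * (ε b F * εh Y F)
              + (1/2 * ε a b) * (εh X E * (ε E F * εh Y F))) :=
          Finset.sum_congr rfl fun E _ => Finset.sum_congr rfl fun F _ => e2 E F
      _ = (∑ E : Fin 4, ∑ F : Fin 4, (ε b E * εh X E) * (ε a F * εh Y F))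
            - (∑ E : Fin 4, ∑ F : Fin 4, (ε a E * εh X E) * (ε b F * εh Y F))
            + (∑ E : Fin 4, ∑ F : Fin 4, (1/2 * ε a b) * (εh X E * (ε E F * εh Y F))) := by
          simp only [Finset.sum_add_distrib, Finset.sum_sub_distrib]
      _ = (if b = X then (1:ℂ) else 0) * (if a = Y then (1:ℂ) else 0)
            - (if a = X then (1:ℂ) else 0) * (if b = Y then (1:ℂ) else 0)
            + 1/2 * ε a b * εh X Y := by
          rw [← Finset.sum_mul_sum, ← Finset.sum_mul_sum, hεinv b X, hεinv a Y,
            hεinv a X, hεinv b Y]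
          congr 1
          simp only [← Finset.mul_sum]
          simp only [hεinv]
          simp only [mul_ite, mul_one, mul_zero]
          rw [Fintype.sum_ite_eq' Y (fun E => εh X E)]
  -- contraction of γs with γloU over spinor indices
  have hM : ∀ a b : Fin 5, (∑ A : Fin 4, ∑ B : Fin 4, γs a A B * γloU b A B)
      = if b = a then (-2:ℂ) else 0 := by
    intro a b
    calc ∑ A : Fin 4, ∑ B : Fin 4, γs a A B * γloU b A B
        = ∑ A : Fin 4, ∑ B : Fin 4, ∑ c : Fin 5, ginv b c * (γs a A B * γlo c A B) := by
          refine Finset.sum_congr rfl fun A _ => Finset.sum_congr rfl fun B _ => ?_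
          rw [hγloU, Finset.mul_sum]
          exact Finset.sum_congr rfl fun c _ => by ring
      _ = ∑ c : Fin 5, ∑ A : Fin 4, ∑ B : Fin 4, ginv b c * (γs a A B * γlo c A B) :=
          (sum_comm3 _).symm
      _ = ∑ c : Fin 5, ginv b c * (-2 * g a c) := by
          refine Finset.sum_congr rfl fun c _ => ?_
          simp only [← Finset.mul_sum]
          rw [h2g]
      _ = -2 * ∑ c : Fin 5, ginv b c * g c a := by
          rw [Finset.mul_sum]
          exact Finset.sum_congr rfl fun c _ => by rw [hgsymm a c]; ring
      _ = -2 * (if b = a then (1:ℂ) else 0) := by rw [hginv]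
      _ = if b = a then (-2:ℂ) else 0 := by split <;> ring
  -- the single–slot contraction identity
  have hL : ∀ (j : Fin p) (A B : Fin p → Fin 4),
      ∑ X : Fin 4, ∑ Y : Fin 4, K X Y (A j) (B j) *
        T (Function.update A j X) (Function.update B j Y) = -2 * T A B := by
    intro j A B
    have hS1 : ∑ X : Fin 4, ∑ Y : Fin 4,
        (if B j = X then (1:ℂ) else 0) * (if A j = Y then (1:ℂ) else 0) *
          T (Function.update A j X) (Function.update B j Y)
        = T (Function.update A j (B j)) (Function.update B j (A j)) := by
      simp [ite_mul, zero_mul, one_mul, Finset.sum_ite_irrel,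
        Fintype.sum_ite_eq]
    have hS2 : ∑ X : Fin 4, ∑ Y : Fin 4,
        (if A j = X then (1:ℂ) else 0) * (if B j = Y then (1:ℂ) else 0) *
          T (Function.update A j X) (Function.update B j Y)
        = T A B := by
      simp [ite_mul, zero_mul, one_mul, Fintype.sum_ite_eq]
    have hS3 : ∑ X : Fin 4, ∑ Y : Fin 4, 1/2 * ε (A j) (B j) *
        (εh X Y * T (Function.update A j X) (Function.update B j Y)) = 0 := by
      simp only [← Finset.mul_sum]
      rw [hTtr j A B, mul_zero]
    calc ∑ X : Fin 4, ∑ Y : Fin 4, K X Y (A j) (B j) *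
          T (Function.update A j X) (Function.update B j Y)
        = ∑ X : Fin 4, ∑ Y : Fin 4,
            ((if B j = X then (1:ℂ) else 0) * (if A j = Y then (1:ℂ) else 0) *
              T (Function.update A j X) (Function.update B j Y)
            - (if A j = X then (1:ℂ) else 0) * (if B j = Y then (1:ℂ) else 0) *
              T (Function.update A j X) (Function.update B j Y)
            + 1/2 * ε (A j) (B j) *
              (εh X Y * T (Function.update A j X) (Function.update B j Y))) := by
          refine Finset.sum_congr rfl fun X _ => Finset.sum_congr rfl fun Y _ => ?_
          rw [hK]; ring
      _ = T (Function.update A j (B j)) (Function.update B j (A j)) - T A B + 0 := by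
          simp only [Finset.sum_add_distrib, Finset.sum_sub_distrib]
          rw [hS1, hS2, hS3]
      _ = -2 * T A B := by
          rw [hTanti j A B]; ring
  -- factorization of sums over index tuples
  have hfact5 : ∀ f : Fin p → Fin 5 → ℂ,
      (∑ a : Fin p → Fin 5, ∏ j, f j (a j)) = ∏ j, ∑ x : Fin 5, f j x :=
    fun f => (Fintype.prod_sum f).symm
  have hfact4 : ∀ f : Fin p → Fin 4 → Fin 4 → ℂ,
      (∑ A : Fin p → Fin 4, ∑ B : Fin p → Fin 4, ∏ j, f j (A j) (B j))
        = ∏ j, ∑ X : Fin 4, ∑ Y : Fin 4, f j X Y := by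
    intro f
    calc ∑ A : Fin p → Fin 4, ∑ B : Fin p → Fin 4, ∏ j, f j (A j) (B j)
        = ∑ A : Fin p → Fin 4, ∏ j, ∑ Y : Fin 4, f j (A j) Y :=
          Finset.sum_congr rfl fun A _ => (Fintype.prod_sum fun j Y => f j (A j) Y).symm
      _ = ∏ j, ∑ X : Fin 4, ∑ Y : Fin 4, f j X Y :=
          (Fintype.prod_sum fun j X => ∑ Y : Fin 4, f j X Y).symm
  -- existence
  have hex : ∀ A B : Fin p → Fin 4,
      ∑ a : Fin p → Fin 5, T0 a * ∏ j : Fin p, γloU (a j) (A j) (B j) = T A B := by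
    intro A B
    have main := aux_contract (-2) p K T hL A B
    calc ∑ a : Fin p → Fin 5, T0 a * ∏ j : Fin p, γloU (a j) (A j) (B j)
        = ∑ a : Fin p → Fin 5, (1 / (-2:ℂ)^p) *
            ∑ C : Fin p → Fin 4, ∑ D : Fin p → Fin 4,
              ((∏ j, γs (a j) (C j) (D j)) * T C D * ∏ j, γloU (a j) (A j) (B j)) := by
          refine Finset.sum_congr rfl fun a _ => ?_
          rw [hT0 a, mul_assoc]
          congr 1
          simp only [Finset.sum_mul]
      _ = (1 / (-2:ℂ)^p) * ∑ a : Fin p → Fin 5,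
            ∑ C : Fin p → Fin 4, ∑ D : Fin p → Fin 4,
              ((∏ j, γs (a j) (C j) (D j)) * T C D * ∏ j, γloU (a j) (A j) (B j)) := by
          rw [← Finset.mul_sum]
      _ = (1 / (-2:ℂ)^p) * ∑ C : Fin p → Fin 4, ∑ D : Fin p → Fin 4,
            ∑ a : Fin p → Fin 5,
              ((∏ j, γs (a j) (C j) (D j)) * T C D * ∏ j, γloU (a j) (A j) (B j)) :=
          congrArg _ (sum_comm3 _)
      _ = (1 / (-2:ℂ)^p) * ∑ C : Fin p → Fin 4, ∑ D : Fin p → Fin 4,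
            (∏ j, K (C j) (D j) (A j) (B j)) * T C D := by
          refine congrArg _ (Finset.sum_congr rfl fun C _ =>
            Finset.sum_congr rfl fun D _ => ?_)
          calc ∑ a : Fin p → Fin 5,
                (∏ j, γs (a j) (C j) (D j)) * T C D * ∏ j, γloU (a j) (A j) (B j)
              = (∑ a : Fin p → Fin 5,
                  ∏ j, (γs (a j) (C j) (D j) * γloU (a j) (A j) (B j))) * T C D := by
                rw [Finset.sum_mul]
                exact Finset.sum_congr rfl fun a _ => by rw [Finset.prod_mul_distrib]; ring
            _ = (∏ j, ∑ x : Fin 5, γs x (C j) (D j) * γloU x (A j) (B j)) * T C D := by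
                rw [hfact5 (fun j x => γs x (C j) (D j) * γloU x (A j) (B j))]
            _ = (∏ j, K (C j) (D j) (A j) (B j)) * T C D := by simp only [hKdef]
      _ = (1 / (-2:ℂ)^p) * ((-2:ℂ)^p * T A B) := by rw [main]
      _ = T A B := by field_simp
  refine ⟨hex, ?_⟩
  intro t ht
  funext a
  have key : T0 a = t a := by
    calc T0 a
        = (1 / (-2:ℂ)^p) * ∑ A : Fin p → Fin 4, ∑ B : Fin p → Fin 4,
            (∏ j, γs (a j) (A j) (B j)) * T A B := hT0 a
      _ = (1 / (-2:ℂ)^p) * ∑ A : Fin p → Fin 4, ∑ B : Fin p → Fin 4,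
            ∑ b : Fin p → Fin 5,
              t b * ((∏ j, γs (a j) (A j) (B j)) * ∏ j, γloU (b j) (A j) (B j)) := by
          refine congrArg _ (Finset.sum_congr rfl fun A _ =>
            Finset.sum_congr rfl fun B _ => ?_)
          rw [← ht A B, Finset.mul_sum]
          exact Finset.sum_congr rfl fun b _ => by ring
      _ = (1 / (-2:ℂ)^p) * ∑ b : Fin p → Fin 5, ∑ A : Fin p → Fin 4,
            ∑ B : Fin p → Fin 4,
              t b * ((∏ j, γs (a j) (A j) (B j)) * ∏ j, γloU (b j) (A j) (B j)) :=
          congrArg _ (sum_comm3 _).symm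
      _ = (1 / (-2:ℂ)^p) * ∑ b : Fin p → Fin 5, t b *
            ∏ j, ∑ X : Fin 4, ∑ Y : Fin 4, γs (a j) X Y * γloU (b j) X Y := by
          refine congrArg _ (Finset.sum_congr rfl fun b _ => ?_)
          calc ∑ A : Fin p → Fin 4, ∑ B : Fin p → Fin 4,
                t b * ((∏ j, γs (a j) (A j) (B j)) * ∏ j, γloU (b j) (A j) (B j))
              = t b * ∑ A : Fin p → Fin 4, ∑ B : Fin p → Fin 4,
                  ∏ j, (γs (a j) (A j) (B j) * γloU (b j) (A j) (B j)) := by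
                simp only [← Finset.mul_sum]
                refine congrArg _ (Finset.sum_congr rfl fun A _ =>
                  Finset.sum_congr rfl fun B _ => ?_)
                rw [Finset.prod_mul_distrib]
            _ = t b * ∏ j, ∑ X : Fin 4, ∑ Y : Fin 4, γs (a j) X Y * γloU (b j) X Y := by
                rw [hfact4 (fun j X Y => γs (a j) X Y * γloU (b j) X Y)]
      _ = (1 / (-2:ℂ)^p) * ∑ b : Fin p → Fin 5, t b *
            ∏ j, (if b j = a j then (-2:ℂ) else 0) :=
          congrArg _ (Finset.sum_congr rfl fun b _ =>
            congrArg _ (Finset.prod_congr rfl fun j _ => hM (a j) (b j)))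
      _ = (1 / (-2:ℂ)^p) * ∑ b : Fin p → Fin 5,
            t b * (if b = a then (-2:ℂ)^p else 0) :=
          congrArg _ (Finset.sum_congr rfl fun b _ =>
            congrArg _ (aux_prod_ite a b (-2)))
      _ = t a := by
          simp only [mul_ite, mul_zero, Fintype.sum_ite_eq']
          field_simp
  exact key.symm
end

section
/- Any rank-4 spinor W_{ABCD} on a 4-dimensional symplectic space that is completely ε-traceless, symmetric within each of the pairs (A,B) and (C,D), and symmetric under interchange of the pairs, decomposes uniquely as W_{ABCD} = Ψ_{ABCD} + Ω_{ACBD} + Ω_{ADBC}, where Ψ is totally symmetric and Ω has Riemann-tensor symmetries: Ω_{ABCD} = Ω_{[AB]CD} = Ω_{CDAB}, Ω_{ABCD} + Ω_{BCAD} + Ω_{CABD} = 0. Explicitly Ψ_{ABCD} = (1/3)(W_{ABCD} + W_{ACBD} + W_{ADBC}) and Ω_{ACBD} = (1/3)(W_{ABCD} − W_{ADBC}). -/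
/-- A completely ε-traceless rank-4 spinor `W_{ABCD}`,
symmetric in each pair and under pair exchange, decomposes uniquely as
`W_{ABCD} = Ψ_{ABCD} + Ω_{ACBD} + Ω_{ADBC}` with `Ψ` totally symmetric and
`Ω` having Riemann symmetries; explicitly
`Ψ_{ABCD} = (1/3)(W_{ABCD} + W_{ACBD} + W_{ADBC})` and
`Ω_{ACBD} = (1/3)(W_{ABCD} − W_{ADBC})`. -/
theorem stmt_13
    (ε εh : Fin 4 → Fin 4 → ℂ)
    (W Ψ Ω : Fin 4 → Fin 4 → Fin 4 → Fin 4 → ℂ)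
    (hεa : ∀ A B : Fin 4, ε A B = -ε B A)
    (hεinv : ∀ A C : Fin 4,
      ∑ B : Fin 4, ε A B * εh C B = if A = C then (1 : ℂ) else 0)
    (hsym12 : ∀ A B C D : Fin 4, W A B C D = W B A C D)
    (hsym34 : ∀ A B C D : Fin 4, W A B C D = W A B D C)
    (hpair : ∀ A B C D : Fin 4, W A B C D = W C D A B)
    (htr12 : ∀ C D : Fin 4,
      ∑ A : Fin 4, ∑ B : Fin 4, εh A B * W A B C D = 0)
    (htr34 : ∀ A B : Fin 4,
      ∑ C : Fin 4, ∑ D : Fin 4, εh C D * W A B C D = 0)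
    (htr13 : ∀ B D : Fin 4,
      ∑ A : Fin 4, ∑ C : Fin 4, εh A C * W A B C D = 0)
    (htr14 : ∀ B C : Fin 4,
      ∑ A : Fin 4, ∑ D : Fin 4, εh A D * W A B C D = 0)
    (htr23 : ∀ A D : Fin 4,
      ∑ B : Fin 4, ∑ C : Fin 4, εh B C * W A B C D = 0)
    (htr24 : ∀ A C : Fin 4,
      ∑ B : Fin 4, ∑ D : Fin 4, εh B D * W A B C D = 0)
    (hΨ : ∀ A B C D : Fin 4,
      Ψ A B C D = (1/3 : ℂ) * (W A B C D + W A C B D + W A D B C))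
    (hΩ : ∀ A B C D : Fin 4,
      Ω A C B D = (1/3 : ℂ) * (W A B C D - W A D B C)) :
    (∀ A B C D : Fin 4, W A B C D = Ψ A B C D + Ω A C B D + Ω A D B C) ∧
    (∀ A B C D : Fin 4, Ψ A B C D = Ψ B A C D) ∧
    (∀ A B C D : Fin 4, Ψ A B C D = Ψ A C B D) ∧
    (∀ A B C D : Fin 4, Ψ A B C D = Ψ A B D C) ∧
    (∀ A B C D : Fin 4, Ω A B C D = -Ω B A C D) ∧
    (∀ A B C D : Fin 4, Ω A B C D = Ω C D A B) ∧
    (∀ A B C D : Fin 4, Ω A B C D + Ω B C A D + Ω C A B D = 0) ∧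
    (∀ Ψ' Ω' : Fin 4 → Fin 4 → Fin 4 → Fin 4 → ℂ,
      (∀ A B C D : Fin 4, Ψ' A B C D = Ψ' B A C D) →
      (∀ A B C D : Fin 4, Ψ' A B C D = Ψ' A C B D) →
      (∀ A B C D : Fin 4, Ψ' A B C D = Ψ' A B D C) →
      (∀ A B C D : Fin 4, Ω' A B C D = -Ω' B A C D) →
      (∀ A B C D : Fin 4, Ω' A B C D = Ω' C D A B) →
      (∀ A B C D : Fin 4, Ω' A B C D + Ω' B C A D + Ω' C A B D = 0) →
      (∀ A B C D : Fin 4,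
        W A B C D = Ψ' A B C D + Ω' A C B D + Ω' A D B C) →
      Ψ' = Ψ ∧ Ω' = Ω) := by
  refine ⟨?_, ?_, ?_, ?_, ?_, ?_, ?_, ?_⟩
  · intro A B C D
    rw [hΨ A B C D, hΩ A B C D, hΩ A B D C]
    linear_combination (1/3 : ℂ) * hsym34 A B C D
  · intro A B C D
    rw [hΨ A B C D, hΨ B A C D]
    linear_combination (1/3 : ℂ) * (hsym12 A B C D - hpair B D A C - hpair B C A D)
  · intro A B C D
    rw [hΨ A B C D, hΨ A C B D]
    linear_combination (1/3 : ℂ) * hsym34 A D B C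
  · intro A B C D
    rw [hΨ A B C D, hΨ A B D C]
    linear_combination (1/3 : ℂ) * hsym34 A B C D
  · intro A B C D
    rw [hΩ A C B D, hΩ B C A D]
    linear_combination (1/3 : ℂ) * (hpair B C A D + hsym34 A D B C - hpair B D C A - hsym12 C A B D)
  · intro A B C D
    rw [hΩ A C B D, hΩ C A D B]
    linear_combination (1/3 : ℂ) * (hsym34 A C B D - hsym12 C A D B + hpair C B A D)
  · intro A B C D
    rw [hΩ A C B D, hΩ B A C D, hΩ C B A D]
    linear_combination (1/3 : ℂ) * (- hpair B D A C - hpair C D B A + hsym12 C B A D + hpair B C A D + hsym34 A D B C)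
  · intro Ψ' Ω' h12 h23 h34 ha hp hb hdec
    have ha2 : ∀ X Y Z T : Fin 4, Ω' X Y Z T = -Ω' X Y T Z := by
      intro X Y Z T
      rw [hp X Y Z T, ha Z T X Y, hp T Z X Y]
    have hΔ : ∀ A B C D : Fin 4, Ψ' A D B C = Ψ' A B C D := by
      intro A B C D
      rw [h34 A D B C, h23 A D C B, h34 A C D B, h23 A C B D]
    constructor
    · funext A B C D
      rw [hΨ A B C D]
      linear_combination (-(1/3) : ℂ) * (hdec A B C D + hdec A C B D + hdec A D B C)
        + (1/3 : ℂ) * h23 A B C D - (1/3 : ℂ) * hΔ A B C D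
        - (1/3 : ℂ) * (ha2 A D C B + ha2 A B D C + ha2 A C D B)
    · funext X Y Z T
      have key : ∀ A B C D : Fin 4, Ω' A C B D = Ω A C B D := by
        intro A B C D
        rw [hΩ A B C D]
        linear_combination (-(1/3) : ℂ) * (hdec A B C D - hdec A D B C)
          + (1/3 : ℂ) * hΔ A B C D + (1/3 : ℂ) * (ha2 A B D C + ha2 A C D B)
          - (1/3 : ℂ) * hp A D B C - (1/3 : ℂ) * hb A B C D + (1/3 : ℂ) * ha C A B D
      exact key X Z Y T
end

section
/- Any rank-4 spinor X_{ABCD} on a 4-dimensional symplectic space satisfying X_{ABCD} = X_{(AB)CD} = X_{AB(CD)} = X_{CDAB} decomposes as X_{ABCD} = Λ(ε_{AD}ε_{BC} + ε_{AC}ε_{BD}) + (1/6)(ε_{BD}Σ_{AC} + ε_{BC}Σ_{AD} + ε_{AD}Σ_{BC} + ε_{AC}Σ_{BD}) + Ψ_{ABCD} + Ω_{ACBD} + Ω_{ADBC}, where Λ = X^{AB}{}_{AB}/20, Σ_{AB} is antisymmetric and traceless, Ψ_{ABCD} is totally symmetric and traceless, and Ω_{ABCD} is totally traceless with Riemann symmetries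 (Ω_{ABCD}=Ω_{[AB]CD}=Ω_{CDAB}, cyclic identity Ω_{ABCD}+Ω_{BCAD}+Ω_{CABD}=0). -/
/-!
The totally symmetric part is `Ψ = X_(ABCD)`, and the rest of `X` is recovered from the tensor
`R_ABCD = X_ACBD - X_ADBC`, which has the symmetries of a curvature tensor:
`X_ABCD = Ψ_ABCD + (R_ACBD + R_ADBC) / 3`. To make `R` traceless one subtracts multiples of
`P(ε, ε)` and `P(ε, Σ)`, where `P = curvProd` turns two 2-forms into a curvature tensor. The
coefficients come from `ε^{AC} P(ε, β)_ABCD = 6 β_BD + ε_BD ε^{AC} β_AC` (in dimension 4), and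
the other traces of a curvature tensor vanish with the first one. Finally
`(P(α, β)_ACBD + P(α, β)_ADBC) / 3` is the symmetrised `α ⊗ β`, which produces the `Λ` and `Σ`
terms of the decomposition.
-/

open Finset Matrix

variable {ι R : Type*} [CommRing R]

def algCurvatureTensors : Submodule R (ι → ι → ι → ι → R) where
  carrier := {Ω | (∀ A B C D, Ω A B C D = -Ω B A C D) ∧ (∀ A B C D, Ω A B C D = Ω C D A B) ∧
    ∀ A B C D, Ω A B C D + Ω B C A D + Ω C A B D = 0}
  add_mem' := by
    rintro Ω Ω' ⟨h₁, h₂, h₃⟩ ⟨h₁', h₂', h₃'⟩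
    refine ⟨fun A B C D => ?_, fun A B C D => ?_, fun A B C D => ?_⟩ <;>
      simp only [Pi.add_apply]
    · rw [h₁, h₁', neg_add]
    · rw [h₂, h₂']
    · linear_combination h₃ A B C D + h₃' A B C D
  zero_mem' := by simp
  smul_mem' := by
    rintro c Ω ⟨h₁, h₂, h₃⟩
    refine ⟨fun A B C D => ?_, fun A B C D => ?_, fun A B C D => ?_⟩ <;>
      simp only [Pi.smul_apply, smul_eq_mul]
    · rw [h₁, mul_neg]
    · rw [h₂]
    · linear_combination c * h₃ A B C D

theorem eq_neg_swap34_of_mem_algCurvatureTensors {Ω : ι → ι → ι → ι → R}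
    (hΩ : Ω ∈ algCurvatureTensors) (A B C D : ι) : Ω A B C D = -Ω A B D C := by
  rw [hΩ.2.1, hΩ.1, ← hΩ.2.1]

-- Three times the part of `α ⊗ β + β ⊗ α` obeying the cyclic identity, i.e. this symmetric
-- product of 2-forms minus its totally antisymmetric part.
def curvProd (α β : ι → ι → R) : ι → ι → ι → ι → R := fun A B C D =>
  2 * (α A B * β C D + β A B * α C D) + α A C * β B D + β A C * α B D
    - α A D * β B C - β A D * α B C

section CurvProd

variable {α β : ι → ι → R} (hα : ∀ A B, α A B = -α B A) (hβ : ∀ A B, β A B = -β B A)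
include hα hβ

theorem curvProd_mem : curvProd α β ∈ algCurvatureTensors := by
  refine ⟨fun A B C D => ?_, fun A B C D => ?_, fun A B C D => ?_⟩ <;> simp only [curvProd]
  · rw [hα B A, hβ B A, hα B C, hβ B C, hα B D, hβ B D]; ring
  · rw [hα C A, hβ C A, hα D B, hβ D B, hα C B, hβ C B, hα D A, hβ D A]; ring
  · rw [hα B A, hβ B A, hα C A, hβ C A, hα C B, hβ C B]; ring

theorem curvProd_add_curvProd (A B C D : ι) : curvProd α β A C B D + curvProd α β A D B C =
    3 * (α A C * β B D + β A C * α B D + α A D * β B C + β A D * α B C) := by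
  simp only [curvProd]
  rw [hα D B, hβ D B, hα C B, hβ C B, hβ D C, hα D C]; ring

end CurvProd

structure IsPairSymmetric (X : ι → ι → ι → ι → R) : Prop where
  swap12 : ∀ A B C D, X A B C D = X B A C D
  swap34 : ∀ A B C D, X A B C D = X A B D C
  pair : ∀ A B C D, X A B C D = X C D A B

def riemannPart (X : ι → ι → ι → ι → R) : ι → ι → ι → ι → R :=
  (fun A B C D => X A C B D) - fun A B C D => X A D B C

theorem IsPairSymmetric.riemannPart_mem {X : ι → ι → ι → ι → R} (hX : IsPairSymmetric X) :
    riemannPart X ∈ algCurvatureTensors := by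
  refine ⟨fun A B C D => ?_, fun A B C D => ?_, fun A B C D => ?_⟩ <;>
    simp only [riemannPart, Pi.sub_apply]
  · rw [hX.pair B C, hX.pair B D]; ring
  · rw [hX.swap12 C A D B, hX.swap34 A C D B, hX.swap12 C B D A, hX.swap34 B C D A,
      hX.pair B C A D]
  · rw [hX.swap12 B A C D, hX.pair B D C A, hX.swap12 C A B D, hX.swap12 C B A D,
      hX.pair B C A D, hX.pair C D A B]
    ring

section Contraction

variable [Fintype ι] {εh : ι → ι → R}

theorem sum_swap_of_antisymm (hεh : ∀ A B, εh A B = -εh B A) (f : ι → ι → R) :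
    ∑ A, ∑ C, εh A C * f C A = -∑ A, ∑ C, εh A C * f A C := by
  rw [sum_comm, ← sum_neg_distrib]
  refine sum_congr rfl fun A _ => ?_
  rw [← sum_neg_distrib]
  exact sum_congr rfl fun C _ => by rw [hεh, neg_mul]

theorem sum_eq_zero_of_antisymm_of_symm [IsAddTorsionFree R] (hεh : ∀ A B, εh A B = -εh B A)
    {f : ι → ι → R} (hf : ∀ A C, f A C = f C A) : ∑ A, ∑ C, εh A C * f A C = 0 := by
  refine self_eq_neg.mp ?_
  calc ∑ A, ∑ C, εh A C * f A C = ∑ A, ∑ C, εh A C * f C A :=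
        sum_congr rfl fun A _ => sum_congr rfl fun C _ => by rw [hf]
    _ = _ := sum_swap_of_antisymm hεh f

def trace13 (εh : ι → ι → R) : (ι → ι → ι → ι → R) →ₗ[R] ι → ι → R where
  toFun T B D := ∑ A, ∑ C, εh A C * T A B C D
  map_add' T U := by ext B D; simp only [Pi.add_apply, mul_add, sum_add_distrib]
  map_smul' c T := by
    ext B D; simp only [Pi.smul_apply, smul_eq_mul, RingHom.id_apply, mul_sum, mul_left_comm]

@[simp]
theorem trace13_apply (εh : ι → ι → R) (T : ι → ι → ι → ι → R) (B D : ι) :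
    trace13 εh T B D = ∑ A, ∑ C, εh A C * T A B C D := rfl

section CurvatureTraces

variable {Ω : ι → ι → ι → ι → R} (hΩ : Ω ∈ algCurvatureTensors) (h13 : trace13 εh Ω = 0)
include hΩ h13

theorem trace14_eq_zero (B C : ι) : ∑ A, ∑ D, εh A D * Ω A B C D = 0 := by
  simp_rw [eq_neg_swap34_of_mem_algCurvatureTensors hΩ _ B C, mul_neg, sum_neg_distrib,
    ← trace13_apply, h13, Pi.zero_apply, neg_zero]

theorem trace23_eq_zero (hεh : ∀ A B, εh A B = -εh B A) (A D : ι) :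
    ∑ B, ∑ C, εh B C * Ω A B C D = 0 := by
  rw [← neg_eq_zero, ← trace14_eq_zero hΩ h13 D A, ← sum_swap_of_antisymm hεh]
  exact sum_congr rfl fun B _ => sum_congr rfl fun C _ => by rw [hΩ.2.1]

theorem trace24_eq_zero (hεh : ∀ A B, εh A B = -εh B A) (A C : ι) :
    ∑ B, ∑ D, εh B D * Ω A B C D = 0 := by
  simp_rw [eq_neg_swap34_of_mem_algCurvatureTensors hΩ A _ C, mul_neg, sum_neg_distrib,
    trace23_eq_zero hΩ h13 hεh A C, neg_zero]

end CurvatureTraces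

section PairSymmetric

variable (hεh : ∀ A B, εh A B = -εh B A) {X : ι → ι → ι → ι → R}
include hεh

theorem trace13_swap23_eq_zero [IsAddTorsionFree R] (h12 : ∀ A B C D, X A B C D = X B A C D) :
    trace13 εh (fun A B C D => X A C B D) = 0 := by
  ext B D
  exact sum_eq_zero_of_antisymm_of_symm hεh fun A C => h12 A C B D

theorem trace13_perm_eq_neg (h12 : ∀ A B C D, X A B C D = X B A C D)
    (hpair : ∀ A B C D, X A B C D = X C D A B) :
    trace13 εh (fun A B C D => X A D B C) = -trace13 εh X := by
  ext B D
  simp only [trace13_apply, Pi.neg_apply, ← sum_swap_of_antisymm hεh]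
  exact sum_congr rfl fun A _ => sum_congr rfl fun C _ => by rw [hpair, h12]

theorem trace13_riemannPart [IsAddTorsionFree R] (h12 : ∀ A B C D, X A B C D = X B A C D)
    (hpair : ∀ A B C D, X A B C D = X C D A B) :
    trace13 εh (riemannPart X) = trace13 εh X := by
  rw [riemannPart, map_sub, trace13_swap23_eq_zero hεh h12, trace13_perm_eq_neg hεh h12 hpair,
    zero_sub, neg_neg]

theorem trace13_antisymm (hpair : ∀ A B C D, X A B C D = X C D A B) (B D : ι) :
    trace13 εh X D B = -trace13 εh X B D := by
  simp only [trace13_apply, ← sum_swap_of_antisymm hεh]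
  exact sum_congr rfl fun A _ => sum_congr rfl fun C _ => by rw [hpair]

end PairSymmetric

end Contraction

section Symplectic

variable [Fintype ι] [DecidableEq ι]

-- `εh` plays the role of the raised form `ε^{AB}`.
structure IsSymplecticPair (ε εh : ι → ι → R) : Prop where
  antisymm : ∀ A B, ε A B = -ε B A
  mul_inv : ∀ A C, ∑ B, ε A B * εh C B = if A = C then 1 else 0

namespace IsSymplecticPair

variable {ε εh : ι → ι → R} (h : IsSymplecticPair ε εh)
include h

theorem matrix_mul_transpose : Matrix.of ε * (Matrix.of εh)ᵀ = 1 := by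
  ext A C
  simpa [Matrix.mul_apply, Matrix.one_apply] using h.mul_inv A C

theorem inv_mul (B D : ι) : ∑ A, εh A B * ε A D = if B = D then 1 else 0 := by
  have hinv : (Matrix.of εh)ᵀ * Matrix.of ε = 1 := mul_eq_one_comm.mp h.matrix_mul_transpose
  simpa [Matrix.mul_apply, Matrix.one_apply] using congrFun₂ hinv B D

theorem inv_antisymm (A B : ι) : εh A B = -εh B A := by
  set E := Matrix.of ε
  set H := Matrix.of εh
  have hE : Eᵀ = -E := by ext A B; simpa [E] using h.antisymm B A
  have hHE : H * E = -1 := by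
    have := congrArg Matrix.transpose h.matrix_mul_transpose
    rw [Matrix.transpose_mul, Matrix.transpose_transpose, hE, Matrix.transpose_one,
      Matrix.mul_neg] at this
    rw [← neg_neg (H * E), this]
  have hH : H = -Hᵀ := by
    calc H = H * (E * Hᵀ) := by rw [h.matrix_mul_transpose, Matrix.mul_one]
      _ = -Hᵀ := by rw [← Matrix.mul_assoc, hHE, Matrix.neg_mul, Matrix.one_mul]
  simpa [H] using congrFun₂ hH A B

theorem inv_mul_eq_neg (A D : ι) : ∑ C, εh A C * ε C D = if A = D then -1 else 0 := by
  simp_rw [h.inv_antisymm A, neg_mul, sum_neg_distrib, h.inv_mul]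
  split_ifs <;> simp

theorem sum_eps : ∑ A, ∑ C, εh A C * ε A C = Fintype.card ι := by
  rw [sum_comm]
  simp [h.inv_mul]

theorem sum_eps_left (b : ι) (g : ι → R) : ∑ A, ∑ C, εh A C * (ε A b * g C) = g b := by
  rw [sum_comm]
  simp_rw [← mul_assoc, ← sum_mul, h.inv_mul]
  simp

theorem sum_eps_right (d : ι) (g : ι → R) : ∑ A, ∑ C, εh A C * (ε C d * g A) = -g d := by
  simp_rw [← mul_assoc, ← sum_mul, h.inv_mul_eq_neg]
  simp

end IsSymplecticPair

theorem IsSymplecticPair.trace13_curvProd {ε εh : ι → ι → R} (hε : IsSymplecticPair ε εh)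
    {β : ι → ι → R} (hβ : ∀ A B, β A B = -β B A) :
    trace13 εh (curvProd ε β) =
      fun B D => (Fintype.card ι + 2) * β B D + ε B D * ∑ A, ∑ C, εh A C * β A C := by
  ext B D
  have expand : ∀ A C, εh A C * curvProd ε β A B C D =
      2 * (εh A C * (ε A B * β C D)) + 2 * (εh A C * (ε C D * β A B))
        + β B D * (εh A C * ε A C) + ε B D * (εh A C * β A C)
        - εh A C * (ε A D * β B C) + εh A C * (ε C B * β A D) := fun A C => by
    simp only [curvProd]; rw [hε.antisymm C B]; ring
  simp only [trace13_apply, expand, sum_add_distrib, sum_sub_distrib, ← mul_sum,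
    hε.sum_eps_left, hε.sum_eps_right, hε.sum_eps]
  rw [hβ D B]
  ring

end Symplectic

def doubleTrace [Fintype ι] (εh : ι → ι → R) (X : ι → ι → ι → ι → R) : R :=
  ∑ B, ∑ D, εh B D * trace13 εh X B D

theorem sum_eq_doubleTrace [Fintype ι] {εh : ι → ι → R} {X : ι → ι → ι → ι → R}
    (hpair : ∀ A B C D, X A B C D = X C D A B) :
    ∑ A, ∑ B, ∑ E, ∑ F, εh A E * εh B F * X E F A B = doubleTrace εh X := by
  simp only [doubleTrace, trace13_apply, mul_sum]
  rw [sum_comm]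
  refine sum_congr rfl fun B _ => ?_
  conv_rhs => rw [sum_comm]
  refine sum_congr rfl fun A _ => ?_
  rw [sum_comm]
  exact sum_congr rfl fun F _ => sum_congr rfl fun E _ => by rw [hpair]; ring

section Decomposition

variable {K : Type*} [Field K] (ε εh : Fin 4 → Fin 4 → K) (X : Fin 4 → Fin 4 → Fin 4 → Fin 4 → K)

def sigmaPart : Fin 4 → Fin 4 → K := trace13 εh X - (doubleTrace εh X / 4) • ε

def psiPart : Fin 4 → Fin 4 → Fin 4 → Fin 4 → K :=
  (1 / 3 : K) • (X + (fun A B C D => X A C B D) + fun A B C D => X A D B C)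

def omegaPart : Fin 4 → Fin 4 → Fin 4 → Fin 4 → K :=
  (1 / 3 : K) • riemannPart X - (doubleTrace εh X / 120) • curvProd ε ε
    - (1 / 18 : K) • curvProd ε (sigmaPart ε εh X)

variable {ε εh X}

theorem IsSymplecticPair.sigmaPart_antisymm (hε : IsSymplecticPair ε εh)
    (hpair : ∀ A B C D, X A B C D = X C D A B) (A B : Fin 4) :
    sigmaPart ε εh X A B = -sigmaPart ε εh X B A := by
  simp only [sigmaPart, Pi.sub_apply, Pi.smul_apply, smul_eq_mul]
  rw [trace13_antisymm hε.inv_antisymm hpair, hε.antisymm]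
  ring

theorem IsSymplecticPair.sum_sigmaPart [CharZero K] (hε : IsSymplecticPair ε εh) :
    ∑ A, ∑ B, εh A B * sigmaPart ε εh X A B = 0 := by
  simp only [sigmaPart, Pi.sub_apply, Pi.smul_apply, smul_eq_mul, mul_sub, sum_sub_distrib,
    mul_left_comm _ (doubleTrace εh X / 4), ← mul_sum, hε.sum_eps]
  simp only [doubleTrace, Fintype.card_fin]
  ring

theorem IsPairSymmetric.psiPart_swap12 (hX : IsPairSymmetric X) (A B C D : Fin 4) :
    psiPart X A B C D = psiPart X B A C D := by
  simp only [psiPart, Pi.smul_apply, Pi.add_apply, smul_eq_mul]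
  rw [hX.swap12 A B, hX.pair A C, hX.pair A D]
  ring

theorem IsPairSymmetric.psiPart_swap23 (hX : IsPairSymmetric X) (A B C D : Fin 4) :
    psiPart X A B C D = psiPart X A C B D := by
  simp only [psiPart, Pi.smul_apply, Pi.add_apply, smul_eq_mul]
  rw [hX.swap34 A D C B]
  ring

theorem IsPairSymmetric.psiPart_swap34 (hX : IsPairSymmetric X) (A B C D : Fin 4) :
    psiPart X A B C D = psiPart X A B D C := by
  simp only [psiPart, Pi.smul_apply, Pi.add_apply, smul_eq_mul]
  rw [hX.swap34 A B C D]
  ring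

theorem trace13_psiPart [CharZero K] (hεh : ∀ A B, εh A B = -εh B A) (hX : IsPairSymmetric X) :
    trace13 εh (psiPart X) = 0 := by
  rw [psiPart, map_smul, map_add, map_add, trace13_swap23_eq_zero hεh hX.swap12,
    trace13_perm_eq_neg hεh hX.swap12 hX.pair, add_zero, add_neg_cancel, smul_zero]

theorem IsSymplecticPair.omegaPart_mem (hε : IsSymplecticPair ε εh)
    (hX : IsPairSymmetric X) : omegaPart ε εh X ∈ algCurvatureTensors :=
  sub_mem (sub_mem (Submodule.smul_mem _ _ hX.riemannPart_mem)
    (Submodule.smul_mem _ _ (curvProd_mem hε.antisymm hε.antisymm)))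
    (Submodule.smul_mem _ _ (curvProd_mem hε.antisymm (hε.sigmaPart_antisymm hX.pair)))

theorem IsSymplecticPair.trace13_omegaPart [CharZero K] (hε : IsSymplecticPair ε εh)
    (hX : IsPairSymmetric X) : trace13 εh (omegaPart ε εh X) = 0 := by
  rw [omegaPart, map_sub, map_sub, map_smul, map_smul, map_smul,
    trace13_riemannPart hε.inv_antisymm hX.swap12 hX.pair, hε.trace13_curvProd hε.antisymm,
    hε.trace13_curvProd (hε.sigmaPart_antisymm hX.pair), hε.sum_sigmaPart, hε.sum_eps]
  ext B D
  simp only [sigmaPart, Pi.sub_apply, Pi.smul_apply, smul_eq_mul, Fintype.card_fin,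
    Pi.zero_apply]
  ring

theorem IsSymplecticPair.decomposition [CharZero K] (hε : IsSymplecticPair ε εh)
    (hX : IsPairSymmetric X) (A B C D : Fin 4) :
    X A B C D = doubleTrace εh X / 20 * (ε A D * ε B C + ε A C * ε B D)
      + (1 / 6 : K) * (ε B D * sigmaPart ε εh X A C + ε B C * sigmaPart ε εh X A D
        + ε A D * sigmaPart ε εh X B C + ε A C * sigmaPart ε εh X B D)
      + psiPart X A B C D + omegaPart ε εh X A C B D + omegaPart ε εh X A D B C := by
  have hεε := curvProd_add_curvProd hε.antisymm hε.antisymm A B C D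
  have hεσ := curvProd_add_curvProd hε.antisymm (hε.sigmaPart_antisymm hX.pair) A B C D
  simp only [omegaPart, psiPart, riemannPart, Pi.add_apply, Pi.sub_apply, Pi.smul_apply,
    smul_eq_mul] at *
  rw [hX.swap34 A D C B, hX.swap34 A C D B, hX.swap34 A B D C]
  linear_combination (doubleTrace εh X / 120) * hεε + (1 / 18 : K) * hεσ

end Decomposition

/-- Irreducible decomposition of a rank-4 spinor `X_{ABCD}`
with the symmetries `X_{(AB)CD} = X_{AB(CD)} = X_{ABCD} = X_{CDAB}` into
scalar, traceless antisymmetric, totally symmetric, and Riemann-symmetric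
traceless pieces. -/
theorem stmt_15
    (ε εh : Fin 4 → Fin 4 → ℂ)
    (X : Fin 4 → Fin 4 → Fin 4 → Fin 4 → ℂ)
    (hεa : ∀ A B : Fin 4, ε A B = -ε B A)
    (hεinv : ∀ A C : Fin 4,
      ∑ B : Fin 4, ε A B * εh C B = if A = C then (1 : ℂ) else 0)
    (hsym12 : ∀ A B C D : Fin 4, X A B C D = X B A C D)
    (hsym34 : ∀ A B C D : Fin 4, X A B C D = X A B D C)
    (hpair : ∀ A B C D : Fin 4, X A B C D = X C D A B) :
    ∃ (Λ : ℂ) (Sg : Fin 4 → Fin 4 → ℂ)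
      (Ψ Ω : Fin 4 → Fin 4 → Fin 4 → Fin 4 → ℂ),
      (Λ = (1/20 : ℂ) * ∑ A : Fin 4, ∑ B : Fin 4, ∑ E : Fin 4, ∑ F : Fin 4,
        εh A E * εh B F * X E F A B) ∧
      (∀ A B : Fin 4, Sg A B = -Sg B A) ∧
      (∑ A : Fin 4, ∑ B : Fin 4, εh A B * Sg A B = 0) ∧
      (∀ A B C D : Fin 4, Ψ A B C D = Ψ B A C D) ∧
      (∀ A B C D : Fin 4, Ψ A B C D = Ψ A C B D) ∧
      (∀ A B C D : Fin 4, Ψ A B C D = Ψ A B D C) ∧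
      (∀ B D : Fin 4, ∑ A : Fin 4, ∑ C : Fin 4, εh A C * Ψ A B C D = 0) ∧
      (∀ A B C D : Fin 4, Ω A B C D = -Ω B A C D) ∧
      (∀ A B C D : Fin 4, Ω A B C D = Ω C D A B) ∧
      (∀ A B C D : Fin 4, Ω A B C D + Ω B C A D + Ω C A B D = 0) ∧
      (∀ B D : Fin 4, ∑ A : Fin 4, ∑ C : Fin 4, εh A C * Ω A B C D = 0) ∧
      (∀ B C : Fin 4, ∑ A : Fin 4, ∑ D : Fin 4, εh A D * Ω A B C D = 0) ∧
      (∀ A D : Fin 4, ∑ B : Fin 4, ∑ C : Fin 4, εh B C * Ω A B C D = 0) ∧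
      (∀ A C : Fin 4, ∑ B : Fin 4, ∑ D : Fin 4, εh B D * Ω A B C D = 0) ∧
      (∀ A B C D : Fin 4,
        X A B C D
          = Λ * (ε A D * ε B C + ε A C * ε B D)
            + (1/6 : ℂ) * (ε B D * Sg A C + ε B C * Sg A D
                + ε A D * Sg B C + ε A C * Sg B D)
            + Ψ A B C D + Ω A C B D + Ω A D B C) := by
  have hε : IsSymplecticPair ε εh := ⟨hεa, hεinv⟩
  have hX : IsPairSymmetric X := ⟨hsym12, hsym34, hpair⟩
  have hΩ := hε.omegaPart_mem hX
  have hΩ13 := hε.trace13_omegaPart hX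
  refine ⟨_, sigmaPart ε εh X, psiPart X, omegaPart ε εh X, rfl,
    hε.sigmaPart_antisymm hpair, hε.sum_sigmaPart, hX.psiPart_swap12, hX.psiPart_swap23,
    hX.psiPart_swap34, fun B D => congrFun₂ (trace13_psiPart hε.inv_antisymm hX) B D,
    hΩ.1, hΩ.2.1, hΩ.2.2, fun B D => congrFun₂ hΩ13 B D, trace14_eq_zero hΩ hΩ13,
    trace23_eq_zero hΩ hΩ13 hε.inv_antisymm, trace24_eq_zero hΩ hΩ13 hε.inv_antisymm,
    fun A B C D => ?_⟩
  rw [sum_eq_doubleTrace hpair, hε.decomposition hX A B C D]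
  ring
end
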